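/- arXiv:1904.08004 — 7 statements merged into one kernel-verified Lean document; each statement's English description precedes it below -/
import Mathlib

section
/- For every n ≥ 0, the number of partitions p(n) satisfies p(n) = Σ_{λ ⊢ n} σ(1)^{m₁} σ(2)^{m₂} σ(3)^{m₃} ⋯ / (N(λ) · m₁! · m₂! · m₃! ⋯), where σ(k) is the sum of divisors of k. -/
open PowerSeries Finset

namespace PartSigma

noncomputable section

def sig (i : ℕ) : ℚ := (∑ d ∈ Nat.divisors i, (d : ℚ))

def expX (i : ℕ) : PowerSeries ℚ :=
  PowerSeries.mk fun k => if i ∣ k then (sig i / i) ^ (k / i) / (k / i).factorial else 0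

def geom (d : ℕ) : PowerSeries ℚ :=
  PowerSeries.mk fun k => if d ∣ k then 1 else 0

def gexp (i : ℕ) : PowerSeries ℚ :=
  PowerSeries.mk fun k => if k + 1 = i then sig i else 0

def ggeom (d : ℕ) : PowerSeries ℚ :=
  PowerSeries.mk fun k => if d ∣ (k + 1) then (d : ℚ) else 0

lemma derivative_geom (d : ℕ) (hd : 0 < d) : d⁄dX ℚ (geom d) = ggeom d * geom d := by
  ext k
  rw [coeff_derivative, coeff_mul, Finset.Nat.sum_antidiagonal_eq_sum_range_succ_mk]
  simp only [geom, ggeom, coeff_mk]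
  by_cases hk : d ∣ k + 1
  · rw [if_pos hk]
    have : ∀ a ∈ Finset.range (k + 1),
        (if d ∣ a + 1 then (d:ℚ) else 0) * (if d ∣ k - a then (1:ℚ) else 0)
          = if d ∣ a + 1 then (d:ℚ) else 0 := by
      intro a ha
      have ha' : a ≤ k := Nat.lt_succ_iff.mp (Finset.mem_range.mp ha)
      by_cases h1 : d ∣ a + 1
      · have h2 : d ∣ k - a := by
          have : k - a = (k + 1) - (a + 1) := by omega
          rw [this]
          exact Nat.dvd_sub hk h1
        simp [h1, h2]
      · simp [h1]
    rw [Finset.sum_congr rfl this, ← Finset.sum_filter, Finset.sum_const, Nat.card_multiples]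
    rw [nsmul_eq_mul, one_mul, ← Nat.cast_mul, Nat.div_mul_cancel hk]
    push_cast
    ring
  · rw [if_neg hk, zero_mul]
    symm
    apply Finset.sum_eq_zero
    intro a ha
    have ha' : a ≤ k := Nat.lt_succ_iff.mp (Finset.mem_range.mp ha)
    by_cases h1 : d ∣ a + 1
    · have h2 : ¬ d ∣ k - a := by
        intro h2
        apply hk
        have : k + 1 = (a + 1) + (k - a) := by omega
        rw [this]; exact Nat.dvd_add h1 h2
      rw [if_neg h2, mul_zero]
    · rw [if_neg h1, zero_mul]

lemma derivative_expX (i : ℕ) (hi : 0 < i) : d⁄dX ℚ (expX i) = gexp i * expX i := by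
  ext k
  rw [coeff_derivative, coeff_mul, Finset.Nat.sum_antidiagonal_eq_sum_range_succ_mk]
  simp only [expX, gexp, coeff_mk]
  have hcong : ∀ a ∈ Finset.range (k + 1),
      (if a + 1 = i then sig i else 0) *
          (if i ∣ k - a then (sig i / i) ^ ((k - a) / i) / ((k - a) / i).factorial else 0)
        = if a = i - 1 then
            (sig i * if i ∣ k - a then (sig i / i) ^ ((k - a) / i) / ((k - a) / i).factorial else 0)
          else 0 := by
    intro a ha
    have : a + 1 = i ↔ a = i - 1 := by omega
    by_cases h : a = i - 1
    · rw [if_pos (this.mpr h), if_pos h]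
    · rw [if_neg (fun hh => h (this.mp hh)), if_neg h, zero_mul]
  rw [Finset.sum_congr rfl hcong, Finset.sum_ite_eq' (Finset.range (k + 1)) (i - 1)]
  by_cases hik : i ∣ k + 1
  · have hile : i ≤ k + 1 := Nat.le_of_dvd (Nat.succ_pos k) hik
    have hmem : i - 1 ∈ Finset.range (k + 1) := Finset.mem_range.mpr (by omega)
    rw [if_pos hmem, if_pos hik]
    have hsub : k - (i - 1) = k + 1 - i := by omega
    have hdvd : i ∣ k - (i - 1) := by
      rw [hsub]; exact (Nat.dvd_sub hik dvd_rfl)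
    rw [if_pos hdvd]
    obtain ⟨m, hm⟩ := hik
    have hm1 : 0 < m := Nat.pos_of_ne_zero (by rintro rfl; simp at hm)
    have h1 : (k + 1) / i = m := by rw [hm]; exact Nat.mul_div_cancel_left m hi
    have h2 : (k - (i - 1)) / i = m - 1 := by
      rw [hsub, hm]
      have : i * m - i = i * (m - 1) := by
        rw [Nat.mul_sub_one]
      rw [this, Nat.mul_div_cancel_left _ hi]
    rw [h1, h2]
    obtain ⟨m', rfl⟩ : ∃ m', m = m' + 1 := ⟨m - 1, by omega⟩
    simp only [Nat.add_sub_cancel]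
    rw [pow_succ, Nat.factorial_succ]
    have hknat : (k : ℚ) + 1 = (i : ℚ) * (m' + 1) := by
      have : ((k + 1 : ℕ) : ℚ) = ((i * (m' + 1) : ℕ) : ℚ) := by rw [hm]
      push_cast at this
      push_cast
      linarith
    have hiq : (i : ℚ) ≠ 0 := Nat.cast_ne_zero.mpr hi.ne'
    have hfq : ((m'.factorial : ℚ)) ≠ 0 := Nat.cast_ne_zero.mpr m'.factorial_ne_zero
    rw [hknat]
    field_simp
    push_cast
    ring
  · rw [if_neg hik]
    by_cases hmem : i - 1 ∈ Finset.range (k + 1)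
    · rw [if_pos hmem]
      have hsub : k - (i - 1) = k + 1 - i := by
        have := Finset.mem_range.mp hmem
        omega
      have hndvd : ¬ i ∣ k - (i - 1) := by
        rw [hsub]
        intro h
        apply hik
        have hile : i ≤ k + 1 := by
          have := Finset.mem_range.mp hmem
          omega
        have : k + 1 = (k + 1 - i) + i := by omega
        rw [this]
        exact Nat.dvd_add h dvd_rfl
      rw [if_neg hndvd, mul_zero, zero_mul]
    · rw [if_neg hmem, zero_mul]

lemma derivative_prod {ι : Type*} [DecidableEq ι] (s : Finset ι) (f g : ι → PowerSeries ℚ)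
    (h : ∀ j ∈ s, d⁄dX ℚ (f j) = g j * f j) :
    d⁄dX ℚ (∏ j ∈ s, f j) = (∑ j ∈ s, g j) * ∏ j ∈ s, f j := by
  induction s using Finset.induction with
  | empty => simp
  | @insert a s ha ih =>
    rw [Finset.prod_insert ha, Finset.sum_insert ha, Derivation.leibniz,
      ih (fun j hj => h j (Finset.mem_insert_of_mem hj)), h a (Finset.mem_insert_self a s),
      smul_eq_mul, smul_eq_mul]
    ring

lemma coeff_sum_eq (N b : ℕ) (hb : b + 1 ≤ N) :
    (coeff b) (∑ i ∈ Icc 1 N, gexp i) = (coeff b) (∑ d ∈ Icc 1 N, ggeom d) := by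
  rw [map_sum, map_sum]
  simp only [gexp, ggeom, coeff_mk]
  have h1 : (∑ i ∈ Icc 1 N, if b + 1 = i then sig i else 0) = sig (b + 1) := by
    rw [Finset.sum_ite_eq]
    rw [if_pos (Finset.mem_Icc.mpr ⟨Nat.succ_le_succ (Nat.zero_le b), hb⟩)]
  have h2 : (∑ d ∈ Icc 1 N, if d ∣ b + 1 then (d : ℚ) else 0) = sig (b + 1) := by
    rw [← Finset.sum_filter]
    have : (Icc 1 N).filter (· ∣ b + 1) = (b + 1).divisors := by
      ext d
      simp only [Finset.mem_filter, Finset.mem_Icc, Nat.mem_divisors]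
      constructor
      · rintro ⟨⟨h1, h2⟩, h3⟩
        exact ⟨h3, Nat.succ_ne_zero b⟩
      · rintro ⟨hd, -⟩
        have hd0 : 0 < d := Nat.pos_of_dvd_of_pos hd (Nat.succ_pos b)
        exact ⟨⟨hd0, (Nat.le_of_dvd (Nat.succ_pos b) hd).trans hb⟩, hd⟩
    rw [this]
    rfl
  rw [h1, h2]

lemma key (N : ℕ) : ∀ k, k ≤ N →
    (coeff k) (∏ i ∈ Icc 1 N, expX i) = (coeff k) (∏ d ∈ Icc 1 N, geom d) := by
  have hL : d⁄dX ℚ (∏ i ∈ Icc 1 N, expX i)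
      = (∑ i ∈ Icc 1 N, gexp i) * ∏ i ∈ Icc 1 N, expX i :=
    derivative_prod _ _ _ (fun j hj => derivative_expX j (Finset.mem_Icc.mp hj).1)
  have hR : d⁄dX ℚ (∏ d ∈ Icc 1 N, geom d)
      = (∑ d ∈ Icc 1 N, ggeom d) * ∏ d ∈ Icc 1 N, geom d :=
    derivative_prod _ _ _ (fun j hj => derivative_geom j (Finset.mem_Icc.mp hj).1)
  intro k
  induction k using Nat.strong_induction_on with
  | _ k ih =>
    intro hk
    match k with
    | 0 =>
      rw [coeff_zero_eq_constantCoeff, map_prod, map_prod]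
      apply Finset.prod_congr rfl
      intro i hi
      show constantCoeff (expX i) = constantCoeff (geom i)
      have e1 : constantCoeff (expX i) = (coeff 0) (expX i) := congrFun coeff_zero_eq_constantCoeff.symm _
      have e2 : constantCoeff (geom i) = (coeff 0) (geom i) := congrFun coeff_zero_eq_constantCoeff.symm _
      rw [e1, e2]
      simp [expX, geom, coeff_mk]
    | (k + 1) =>
      have e1 : (coeff k) (d⁄dX ℚ (∏ i ∈ Icc 1 N, expX i))
          = (coeff k) (d⁄dX ℚ (∏ d ∈ Icc 1 N, geom d)) := by
        rw [hL, hR, coeff_mul, coeff_mul]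
        apply Finset.sum_congr rfl
        intro p hp
        have hp' := Finset.HasAntidiagonal.mem_antidiagonal.mp hp
        have h1 : p.1 + 1 ≤ N := by omega
        have h2 : p.2 ≤ N := by omega
        have h2' : p.2 < k + 1 := by omega
        rw [coeff_sum_eq N p.1 h1, ih p.2 h2' h2]
      rw [coeff_derivative, coeff_derivative] at e1
      have : ((k : ℚ) + 1) ≠ 0 := by positivity
      field_simp at e1
      exact e1

lemma parts_mem_Icc {n : ℕ} (lam : Nat.Partition n) {i : ℕ} (hi : i ∈ lam.parts) :
    i ∈ Icc 1 n := by
  refine Finset.mem_Icc.mpr ⟨lam.parts_pos hi, ?_⟩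
  calc i ≤ lam.parts.sum := Multiset.single_le_sum (fun x _ => Nat.zero_le x) i hi
    _ = n := lam.parts_sum

lemma parts_decomp {n : ℕ} (lam : Nat.Partition n) :
    lam.parts = ∑ i ∈ Icc 1 n, Multiset.replicate (lam.parts.count i) i := by
  ext j
  rw [Multiset.count_sum']
  simp only [Multiset.count_replicate]
  rw [Finset.sum_ite_eq' (Icc 1 n) j fun i => lam.parts.count i]
  by_cases hj : j ∈ Icc 1 n
  · rw [if_pos hj]
  · rw [if_neg hj]
    exact Multiset.count_eq_zero.mpr fun h => hj (parts_mem_Icc lam h)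

lemma sum_mul_count {n : ℕ} (lam : Nat.Partition n) :
    ∑ i ∈ Icc 1 n, i * lam.parts.count i = n := by
  conv_rhs => rw [← lam.parts_sum]
  conv_rhs => rw [parts_decomp lam]
  rw [Multiset.sum_sum]
  apply Finset.sum_congr rfl
  intro i _
  rw [Multiset.sum_replicate, smul_eq_mul, mul_comm]

/-- The valid finsupps: support in `Icc 1 n`, total sum `n`, and `i ∣ l i`. -/
def validSet (n : ℕ) : Finset (ℕ →₀ ℕ) :=
  (Finset.finsuppAntidiag (Icc 1 n) n).filter fun l => ∀ i ∈ Icc 1 n, i ∣ l i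

def toPart (n : ℕ) (l : ℕ →₀ ℕ) (hl : l ∈ validSet n) : Nat.Partition n where
  parts := ∑ i ∈ Icc 1 n, Multiset.replicate (l i / i) i
  parts_pos := by
    intro j hj
    rw [Multiset.mem_sum] at hj
    obtain ⟨i, hi, hji⟩ := hj
    rw [Multiset.eq_of_mem_replicate hji]
    exact (Finset.mem_Icc.mp hi).1
  parts_sum := by
    rw [Multiset.sum_sum]
    rw [validSet, Finset.mem_filter, Finset.mem_finsuppAntidiag] at hl
    obtain ⟨⟨hsum, hsupp⟩, hdvd⟩ := hl
    calc ∑ i ∈ Icc 1 n, (Multiset.replicate (l i / i) i).sum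
        = ∑ i ∈ Icc 1 n, l i := by
          apply Finset.sum_congr rfl
          intro i hi
          rw [Multiset.sum_replicate, smul_eq_mul, Nat.div_mul_cancel (hdvd i hi)]
      _ = n := hsum

lemma count_toPart (n : ℕ) (l : ℕ →₀ ℕ) (hl : l ∈ validSet n) (j : ℕ) :
    (toPart n l hl).parts.count j = if j ∈ Icc 1 n then l j / j else 0 := by
  show Multiset.count j (∑ i ∈ Icc 1 n, Multiset.replicate (l i / i) i) = _
  rw [Multiset.count_sum']
  simp only [Multiset.count_replicate]
  rw [Finset.sum_ite_eq' (Icc 1 n) j fun i => l i / i]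

def toFun (n : ℕ) (lam : Nat.Partition n) : ℕ →₀ ℕ :=
  Finsupp.onFinset (Icc 1 n) (fun i => i * lam.parts.count i) fun i hi => by
    have hi' : i * lam.parts.count i ≠ 0 := hi
    have hc : lam.parts.count i ≠ 0 := by
      intro h
      rw [h, mul_zero] at hi'
      exact hi' rfl
    exact parts_mem_Icc lam (Multiset.count_ne_zero.mp hc)

lemma toFun_apply (n : ℕ) (lam : Nat.Partition n) (i : ℕ) :
    toFun n lam i = i * lam.parts.count i := rfl

lemma toFun_mem (n : ℕ) (lam : Nat.Partition n) : toFun n lam ∈ validSet n := by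
  rw [validSet, Finset.mem_filter, Finset.mem_finsuppAntidiag]
  refine ⟨⟨?_, Finsupp.support_onFinset_subset⟩, fun i _ => Dvd.intro _ rfl⟩
  show ∑ i ∈ Icc 1 n, toFun n lam i = n
  simp only [toFun_apply]
  exact sum_mul_count lam

lemma reindex (n : ℕ) (F : ℕ → ℕ → ℚ) :
    ∑ l ∈ Finset.finsuppAntidiag (Icc 1 n) n,
        ∏ i ∈ Icc 1 n, (if i ∣ l i then F i (l i / i) else 0)
      = ∑ lam : Nat.Partition n, ∏ i ∈ Icc 1 n, F i (lam.parts.count i) := by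
  rw [← Finset.sum_filter_of_ne
    (p := fun l : ℕ →₀ ℕ => ∀ i ∈ Icc 1 n, i ∣ l i)
    (by
      intro l hl hprod i hi
      by_contra hdvd
      exact hprod (Finset.prod_eq_zero hi (if_neg hdvd)))]
  refine Finset.sum_bij' (fun l hl => toPart n l hl) (fun lam _ => toFun n lam)
    (fun l hl => Finset.mem_univ _) (fun lam _ => toFun_mem n lam) ?_ ?_ ?_
  · -- left inverse : toFun n (toPart n l hl) = l
    intro l hl
    ext j
    rw [toFun_apply, count_toPart n l hl]
    have hl' := hl
    rw [Finset.mem_filter, Finset.mem_finsuppAntidiag] at hl'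
    obtain ⟨⟨hsum, hsupp⟩, hdvd⟩ := hl'
    by_cases hj : j ∈ Icc 1 n
    · rw [if_pos hj, Nat.mul_div_cancel' (hdvd j hj)]
    · rw [if_neg hj, mul_zero]
      symm
      rw [← Finsupp.notMem_support_iff]
      exact fun h => hj (hsupp h)
  · -- right inverse : toPart n (toFun n lam) _ = lam
    intro lam _
    ext1
    show ∑ i ∈ Icc 1 n, Multiset.replicate (toFun n lam i / i) i = lam.parts
    conv_rhs => rw [parts_decomp lam]
    apply Finset.sum_congr rfl
    intro i hi
    rw [toFun_apply, Nat.mul_div_cancel_left _ (Finset.mem_Icc.mp hi).1]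
  · intro l hl
    apply Finset.prod_congr rfl
    intro i hi
    have hl' := hl
    rw [Finset.mem_filter] at hl'
    rw [if_pos (hl'.2 i hi), count_toPart n l hl, if_pos hi]

lemma coeff_geom_prod (n : ℕ) :
    (coeff n) (∏ d ∈ Icc 1 n, geom d) = (Fintype.card (Nat.Partition n) : ℚ) := by
  rw [coeff_prod]
  have h : ∀ l ∈ Finset.finsuppAntidiag (Icc 1 n) n,
      (∏ i ∈ Icc 1 n, (coeff (l i)) (geom i))
        = ∏ i ∈ Icc 1 n, (if i ∣ l i then (fun _ _ => (1 : ℚ)) i (l i / i) else 0) := by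
    intro l _
    apply Finset.prod_congr rfl
    intro i _
    simp only [geom, coeff_mk]
  rw [Finset.sum_congr rfl h, reindex n fun _ _ => (1 : ℚ)]
  simp [Finset.card_univ]

lemma coeff_expX_prod (n : ℕ) :
    (coeff n) (∏ i ∈ Icc 1 n, expX i)
      = ∑ lam : Nat.Partition n, ∏ i ∈ Icc 1 n,
          (sig i / i) ^ (lam.parts.count i) / (lam.parts.count i).factorial := by
  rw [coeff_prod]
  have h : ∀ l ∈ Finset.finsuppAntidiag (Icc 1 n) n,
      (∏ i ∈ Icc 1 n, (coeff (l i)) (expX i))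
        = ∏ i ∈ Icc 1 n,
            (if i ∣ l i then
              (fun i m => (sig i / i) ^ m / (m.factorial : ℚ)) i (l i / i) else 0) := by
    intro l _
    apply Finset.prod_congr rfl
    intro i _
    simp only [expX, coeff_mk]
  rw [Finset.sum_congr rfl h,
    reindex n fun i m => (sig i / i) ^ m / (m.factorial : ℚ)]

lemma prod_parts_cast {n : ℕ} (lam : Nat.Partition n) :
    (lam.parts.prod : ℚ) = ∏ i ∈ Icc 1 n, (i : ℚ) ^ lam.parts.count i := by
  have h : lam.parts.prod = ∏ i ∈ Icc 1 n, i ^ lam.parts.count i := by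
    conv_lhs => rw [parts_decomp lam]
    rw [Multiset.prod_sum]
    apply Finset.prod_congr rfl
    intro i _
    rw [Multiset.prod_replicate]
  rw [h]
  push_cast
  rfl

end

end PartSigma

/-- `p(n) = Σ_{λ ⊢ n} σ(1)^{m₁} σ(2)^{m₂} ⋯ / (N(λ) · m₁! · m₂! ⋯)`,
where `σ(k)` is the sum of divisors of `k`. -/
theorem partition_count_eq_sigma_sum (n : ℕ) :
    (Fintype.card (Nat.Partition n) : ℚ) =
      ∑ lam : Nat.Partition n,
        (∏ i ∈ Finset.Icc 1 n, (((∑ d ∈ Nat.divisors i, d : ℕ) : ℚ) ^ (lam.parts.count i))) /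
          ((lam.parts.prod : ℚ) *
            ∏ i ∈ Finset.Icc 1 n, ((lam.parts.count i).factorial : ℚ)) := by
  rw [← PartSigma.coeff_geom_prod n, ← PartSigma.key n n le_rfl, PartSigma.coeff_expX_prod n]
  apply Finset.sum_congr rfl
  intro lam _
  rw [PartSigma.prod_parts_cast lam]
  rw [Finset.prod_div_distrib]
  have h2 : ∏ i ∈ Finset.Icc 1 n, (PartSigma.sig i / i) ^ lam.parts.count i
      = (∏ i ∈ Finset.Icc 1 n, PartSigma.sig i ^ lam.parts.count i) /
          ∏ i ∈ Finset.Icc 1 n, (i : ℚ) ^ lam.parts.count i := by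
    rw [← Finset.prod_div_distrib]
    apply Finset.prod_congr rfl
    intro i _
    rw [div_pow]
  rw [h2, div_div]
  congr 1
  apply Finset.prod_congr rfl
  intro i _
  rw [PartSigma.sig]
  push_cast
  ring
end

section
/- Among all partitions of n ≥ 2, the maximum value of the norm N(λ) (product of parts) is: 3^{n/3} if n ≡ 0 (mod 3); 4·3^{(n-4)/3} if n ≡ 1 (mod 3); and 2·3^{(n-2)/3} if n ≡ 2 (mod 3). -/
private def M : ℕ → ℕ
  | 0 => 1
  | 1 => 1
  | 2 => 2
  | 3 => 3
  | 4 => 4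
  | (n+5) => 3 * M (n+2)

private lemma M_rec (n : ℕ) : M (n+5) = 3 * M (n+2) := rfl

private lemma M_mono : ∀ n, M n ≤ M (n+1)
  | 0 => by decide
  | 1 => by decide
  | 2 => by decide
  | 3 => by decide
  | 4 => by decide
  | (k+5) => by
      have h := M_mono (k+2)
      show 3 * M (k+2) ≤ M ((k+1)+5)
      rw [M_rec]
      exact Nat.mul_le_mul_left 3 h

private lemma M_two : ∀ n, 2 * M n ≤ M (n+2)
  | 0 => by decide
  | 1 => by decide
  | 2 => by decide
  | 3 => by decide
  | 4 => by decide
  | (k+5) => by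
      have h := M_two (k+2)
      show 2 * (3 * M (k+2)) ≤ M ((k+2)+5)
      rw [M_rec]
      omega

private lemma M_three : ∀ n, 3 * M n ≤ M (n+3)
  | 0 => by decide
  | 1 => by decide
  | (k+2) => by
      show 3 * M (k+2) ≤ M (k+5)
      rw [M_rec]

private lemma M_key : ∀ a m, 1 ≤ a → a * M m ≤ M (m + a)
  | 0, _, h => absurd h (by omega)
  | 1, m, _ => by simpa using M_mono m
  | 2, m, _ => M_two m
  | 3, m, _ => M_three m
  | (k+4), m, _ => by
      have h1 := M_key (k+2) m (by omega)
      have h2 := M_two (m + (k+2))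
      calc (k+4) * M m ≤ 2 * ((k+2) * M m) := by nlinarith [Nat.zero_le (M m)]
        _ ≤ 2 * M (m + (k+2)) := by omega
        _ ≤ M (m + (k+2) + 2) := h2
        _ = M (m + (k+4)) := by ring_nf

private lemma M_bound : ∀ (s : Multiset ℕ), (∀ x ∈ s, 0 < x) → s.prod ≤ M s.sum := by
  intro s
  induction s using Multiset.induction with
  | empty => intro _; simp [M]
  | cons a s ih =>
      intro hpos
      have ha : 1 ≤ a := hpos a (Multiset.mem_cons_self a s)
      have hs := ih (fun x hx => hpos x (Multiset.mem_cons_of_mem hx))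
      rw [Multiset.prod_cons, Multiset.sum_cons]
      calc a * s.prod ≤ a * M s.sum := Nat.mul_le_mul_left a hs
        _ ≤ M (s.sum + a) := M_key a s.sum ha
        _ = M (a + s.sum) := by ring_nf

private lemma M_eq0 : ∀ k, M (3*k+3) = 3^(k+1)
  | 0 => rfl
  | (k+1) => by
      have : 3*(k+1)+3 = (3*k+1)+5 := by ring
      rw [this, M_rec, show (3*k+1)+2 = 3*k+3 by ring, M_eq0 k, pow_succ]
      ring

private lemma M_eq1 : ∀ k, M (3*k+4) = 4 * 3^k
  | 0 => rfl
  | (k+1) => by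
      have : 3*(k+1)+4 = (3*k+2)+5 := by ring
      rw [this, M_rec, show (3*k+2)+2 = 3*k+4 by ring, M_eq1 k, pow_succ]
      ring

private lemma M_eq2 : ∀ k, M (3*k+2) = 2 * 3^k
  | 0 => rfl
  | (k+1) => by
      have : 3*(k+1)+2 = 3*k+5 := by ring
      rw [show 3*k+5 = (3*k)+5 by ring] at this
      rw [this, M_rec, M_eq2 k, pow_succ]
      ring

/-- Among all partitions of `n ≥ 2`, the maximum value of the norm (product of parts) is
`3^{n/3}` if `n ≡ 0 (mod 3)`, `4·3^{(n-4)/3}` if `n ≡ 1 (mod 3)`, and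
`2·3^{(n-2)/3}` if `n ≡ 2 (mod 3)`. -/
theorem max_norm_of_partition (n : ℕ) (hn : 2 ≤ n) :
    (n % 3 = 0 → IsGreatest {m | ∃ lam : Nat.Partition n, lam.parts.prod = m}
        (3 ^ (n / 3))) ∧
    (n % 3 = 1 → IsGreatest {m | ∃ lam : Nat.Partition n, lam.parts.prod = m}
        (4 * 3 ^ ((n - 4) / 3))) ∧
    (n % 3 = 2 → IsGreatest {m | ∃ lam : Nat.Partition n, lam.parts.prod = m}
        (2 * 3 ^ ((n - 2) / 3))) := by
  have hub : ∀ lam : Nat.Partition n, lam.parts.prod ≤ M n := by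
    intro lam
    have := M_bound lam.parts (fun x hx => lam.parts_pos hx)
    rwa [lam.parts_sum] at this
  refine ⟨?_, ?_, ?_⟩
  · intro h
    obtain ⟨k, hk, hk2⟩ : ∃ k, n = 3*k+3 ∧ n/3 = k+1 := ⟨n/3 - 1, by omega, by omega⟩
    constructor
    · refine ⟨⟨Multiset.replicate (k+1) 3, ?_, ?_⟩, ?_⟩
      · intro i hi; rw [Multiset.eq_of_mem_replicate hi]; norm_num
      · simp [Multiset.sum_replicate]; omega
      · simp [Multiset.prod_replicate, hk2, pow_succ]; ring
    · rintro m ⟨lam, rfl⟩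
      calc lam.parts.prod ≤ M n := hub lam
        _ = 3 ^ (n/3) := by rw [hk, M_eq0]; congr 1; omega
  · intro h
    obtain ⟨k, hk, hk2⟩ : ∃ k, n = 3*k+4 ∧ (n-4)/3 = k := ⟨(n-4)/3, by omega, rfl⟩
    constructor
    · refine ⟨⟨4 ::ₘ Multiset.replicate k 3, ?_, ?_⟩, ?_⟩
      · intro i hi
        rcases Multiset.mem_cons.mp hi with h | h
        · omega
        · rw [Multiset.eq_of_mem_replicate h]; norm_num
      · simp [Multiset.sum_replicate]; omega
      · simp [Multiset.prod_replicate]; omega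
    · rintro m ⟨lam, rfl⟩
      calc lam.parts.prod ≤ M n := hub lam
        _ = 4 * 3 ^ ((n-4)/3) := by rw [hk, M_eq1]; congr 2; omega
  · intro h
    obtain ⟨k, hk, hk2⟩ : ∃ k, n = 3*k+2 ∧ (n-2)/3 = k := ⟨(n-2)/3, by omega, rfl⟩
    constructor
    · refine ⟨⟨2 ::ₘ Multiset.replicate k 3, ?_, ?_⟩, ?_⟩
      · intro i hi
        rcases Multiset.mem_cons.mp hi with h | h
        · omega
        · rw [Multiset.eq_of_mem_replicate h]; norm_num
      · simp [Multiset.sum_replicate]; omega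
      · simp [Multiset.prod_replicate]; omega
    · rintro m ⟨lam, rfl⟩
      calc lam.parts.prod ≤ M n := hub lam
        _ = 2 * 3 ^ ((n-2)/3) := by rw [hk, M_eq2]; congr 2; omega
end

section
/- For n ≡ 1 (mod 3) with n > 1, the only partitions of n achieving the maximum norm are ⟨3^{(n-4)/3} 4⟩ and ⟨2² 3^{(n-4)/3}⟩; for n ≡ 0 (mod 3), n ≥ 3, the unique maximizer is ⟨3^{n/3}⟩; for n ≡ 2 (mod 3), the unique maximizer is ⟨2 · 3^{(n-2)/3}⟩. -/
def F : ℕ → ℕ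
  | 0 => 1
  | 1 => 1
  | 2 => 2
  | 3 => 3
  | 4 => 4
  | (n+5) => 3 * F (n+2)

lemma F_step (m : ℕ) : F (m + 5) = 3 * F (m + 2) := rfl

lemma F_pos : ∀ m, 0 < F m
  | 0 => by decide
  | 1 => by decide
  | 2 => by decide
  | 3 => by decide
  | 4 => by decide
  | (n+5) => by rw [F_step]; have := F_pos (n+2); omega

lemma F_mono1 : ∀ m, F m ≤ F (m + 1)
  | 0 => by decide
  | 1 => by decide
  | 2 => by decide
  | 3 => by decide
  | 4 => by decide
  | (k+5) => by
      have h1 : F (k+5) = 3 * F (k+2) := rfl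
      have h2 : F (k+5+1) = 3 * F (k+3) := rfl
      have h3 := F_mono1 (k + 2)
      have h4 : F (k+2+1) = F (k+3) := rfl
      omega

lemma F_strict : ∀ m, F (m + 1) < F (m + 2)
  | 0 => by decide
  | 1 => by decide
  | 2 => by decide
  | 3 => by decide
  | (n+4) => by
      have h1 : F (n+4+1) = 3 * F (n+2) := rfl
      have h2 : F (n+4+2) = 3 * F (n+3) := rfl
      have h3 := F_strict (n + 1)
      have h4 : F (n+1+1) = F (n+2) := rfl
      have h5 : F (n+1+2) = F (n+3) := rfl
      omega

lemma F_two : ∀ m, 2 * F m ≤ F (m + 2)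
  | 0 => by decide
  | 1 => by decide
  | 2 => by decide
  | 3 => by decide
  | 4 => by decide
  | (n+5) => by
      have h1 : F (n+5) = 3 * F (n+2) := rfl
      have h2 : F (n+5+2) = 3 * F (n+4) := rfl
      have h3 := F_two (n + 2)
      have h4 : F (n+2+2) = F (n+4) := rfl
      omega

lemma F_three : ∀ m, 3 * F m ≤ F (m + 3)
  | 0 => by decide
  | 1 => by decide
  | (n+2) => le_of_eq (F_step n).symm

lemma F_four : ∀ m, 4 * F m ≤ F (m + 4)
  | 0 => by decide
  | 1 => by decide
  | 2 => by decide
  | 3 => by decide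
  | 4 => by decide
  | (n+5) => by
      have h1 : F (n+5) = 3 * F (n+2) := rfl
      have h2 : F (n+5+4) = 3 * F (n+6) := rfl
      have h3 := F_four (n + 2)
      have h4 : F (n+2+4) = F (n+6) := rfl
      omega

lemma F_G : ∀ a, 1 ≤ a → ∀ m, a * F m ≤ F (m + a) := by
  intro a
  induction a using Nat.strong_induction_on with
  | _ a ih =>
    intro ha m
    match a, ha with
    | 1, _ => simpa using F_mono1 m
    | 2, _ => exact F_two m
    | 3, _ => exact F_three m
    | 4, _ => exact F_four m
    | (k+5), _ =>
      have h1 : (k+3) * F m ≤ F (m + (k+3)) := ih (k+3) (by omega) (by omega) m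
      have h2 : 2 * F (m + (k+3)) ≤ F (m + (k+3) + 2) := F_two _
      have h3 : m + (k+3) + 2 = m + (k+5) := by ring
      have h4 := F_pos m
      calc (k+5) * F m ≤ 2 * ((k+3) * F m) := by nlinarith
        _ ≤ 2 * F (m + (k+3)) := by omega
        _ ≤ F (m + (k+3) + 2) := h2
        _ = F (m + (k+5)) := by rw [h3]

lemma F_mono : Monotone F := monotone_nat_of_le_succ F_mono1

lemma F_Gmul : ∀ (r : Multiset ℕ), (∀ x ∈ r, 0 < x) → ∀ m, r.prod * F m ≤ F (r.sum + m) := by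
  intro r
  induction r using Multiset.induction_on with
  | empty => intro _ m; simp
  | cons a t ih =>
    intro h m
    have ha : 0 < a := h a (Multiset.mem_cons_self a t)
    have ht : ∀ x ∈ t, 0 < x := fun x hx => h x (Multiset.mem_cons_of_mem hx)
    rw [Multiset.prod_cons, Multiset.sum_cons]
    calc a * t.prod * F m = a * (t.prod * F m) := by ring
      _ ≤ a * F (t.sum + m) := Nat.mul_le_mul_left a (ih ht m)
      _ ≤ F (t.sum + m + a) := F_G a ha (t.sum + m)
      _ = F (a + t.sum + m) := by ring_nf

lemma prod_le_F (s : Multiset ℕ) (hpos : ∀ x ∈ s, 0 < x) : s.prod ≤ F s.sum := by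
  have h := F_Gmul s hpos 0
  have h0 : F 0 = 1 := rfl
  rw [h0, mul_one, add_zero] at h
  exact h

lemma prod_pos' (s : Multiset ℕ) (hpos : ∀ x ∈ s, 0 < x) : 0 < s.prod :=
  Multiset.prod_pos hpos

lemma improve (s u r : Multiset ℕ) (hu : u ≤ s) (hpos : ∀ x ∈ s, 0 < x)
    (hr : ∀ x ∈ r, 0 < x) (hsum : r.sum = u.sum) (hprod : u.prod < r.prod)
    (hmax : F s.sum ≤ s.prod) : False := by
  set t := s - u with ht
  have hs : s = u + t := by rw [ht, add_comm]; exact (tsub_add_cancel_of_le hu).symm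
  have htpos : ∀ x ∈ t, 0 < x := fun x hx => hpos x (Multiset.mem_of_le (Multiset.sub_le_self s u) hx)
  have h1 : 0 < t.prod := prod_pos' t htpos
  have h2 : s.prod < F s.sum := by
    calc s.prod = u.prod * t.prod := by rw [hs, Multiset.prod_add]
      _ < r.prod * t.prod := Nat.mul_lt_mul_of_lt_of_le hprod le_rfl h1
      _ ≤ r.prod * F t.sum := Nat.mul_le_mul_left _ (prod_le_F t htpos)
      _ ≤ F (r.sum + t.sum) := F_Gmul r hr t.sum
      _ = F s.sum := by rw [hsum, hs, Multiset.sum_add]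
  omega

lemma F_3k : ∀ k, F (3 * k) = 3 ^ k
  | 0 => rfl
  | 1 => rfl
  | (k+2) => by
      have h : 3 * (k + 2) = (3 * k + 1) + 5 := by ring
      rw [h, F_step, show 3 * k + 1 + 2 = 3 * (k+1) by ring, F_3k (k+1)]
      ring

lemma F_3k2 : ∀ k, F (3 * k + 2) = 2 * 3 ^ k
  | 0 => rfl
  | (k+1) => by
      have h : 3 * (k + 1) + 2 = (3 * k) + 5 := by ring
      rw [h, F_step, show 3 * k + 2 = 3 * k + 2 from rfl, F_3k2 k]
      ring

lemma F_3k4 : ∀ k, F (3 * k + 4) = 4 * 3 ^ k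
  | 0 => rfl
  | (k+1) => by
      have h : 3 * (k + 1) + 4 = (3 * k + 2) + 5 := by ring
      rw [h, F_step, show 3 * k + 2 + 2 = 3 * k + 4 by ring, F_3k4 k]
      ring

lemma classify (s : Multiset ℕ) (hpos : ∀ x ∈ s, 0 < x) (hs2 : 2 ≤ s.sum)
    (hmax : F s.sum ≤ s.prod) :
    ∃ k, s = Multiset.replicate k 3 ∨ s = Multiset.replicate k 3 + {2} ∨
      s = Multiset.replicate k 3 + {4} ∨ s = Multiset.replicate k 3 + {2, 2} := by
  -- no part equal to 1
  have no1 : 1 ∉ s := by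
    intro h1
    obtain ⟨t, ht⟩ := Multiset.exists_cons_of_mem h1
    have hts : t.sum + 1 = s.sum := by rw [ht, Multiset.sum_cons]; ring
    have htpos : ∀ x ∈ t, 0 < x := fun x hx => hpos x (ht ▸ Multiset.mem_cons_of_mem hx)
    have hp : s.prod = t.prod := by rw [ht, Multiset.prod_cons, one_mul]
    have h3 : t.prod ≤ F t.sum := prod_le_F t htpos
    obtain ⟨m, hm⟩ : ∃ m, t.sum = m + 1 := ⟨t.sum - 1, by omega⟩
    have h4 : F (m + 1) < F (m + 2) := F_strict m
    have h5 : F s.sum ≤ t.prod := hp ▸ hmax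
    rw [hm] at h3
    have : s.sum = m + 2 := by omega
    rw [this] at h5
    omega
  -- no part ≥ 5
  have le4 : ∀ x ∈ s, x ≤ 4 := by
    intro a ha
    by_contra hcon
    push_neg at hcon
    refine improve s {a} {2, a - 2} ?_ hpos ?_ ?_ ?_ hmax
    · simpa using ha
    · intro x hx; simp at hx; omega
    · simp; omega
    · simp; omega
  have mem234 : ∀ x ∈ s, x = 2 ∨ x = 3 ∨ x = 4 := by
    intro x hx
    have h1 := hpos x hx
    have h2 := le4 x hx
    have h3 : x ≠ 1 := fun h => no1 (h ▸ hx)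
    omega
  -- count constraints
  have not44 : s.count 4 ≤ 1 := by
    by_contra hcon
    push_neg at hcon
    refine improve s {4, 4} {3, 3, 2} ?_ hpos ?_ ?_ ?_ hmax
    · rw [Multiset.le_iff_count]
      intro a
      by_cases h : a = 4 <;> simp [h] <;> omega
    · intro x hx; simp at hx; omega
    · simp
    · simp
  have not42 : ¬(2 ∈ s ∧ 4 ∈ s) := by
    rintro ⟨h2, h4⟩
    refine improve s {2, 4} {3, 3} ?_ hpos ?_ ?_ ?_ hmax
    · rw [Multiset.le_iff_count]
      intro a
      by_cases ha : a = 2 <;> by_cases hb : a = 4 <;>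
        simp [ha, hb, Multiset.one_le_count_iff_mem] <;> first | omega | assumption
    · intro x hx; simp at hx; omega
    · simp
    · simp
  have not222 : s.count 2 ≤ 2 := by
    by_contra hcon
    push_neg at hcon
    refine improve s {2, 2, 2} {3, 3} ?_ hpos ?_ ?_ ?_ hmax
    · rw [Multiset.le_iff_count]
      intro a
      by_cases h : a = 2 <;> simp [h] <;> omega
    · intro x hx; simp at hx; omega
    · simp
    · simp
  -- decomposition
  have hdecomp : s = Multiset.replicate (s.count 3) 3 +
      (Multiset.replicate (s.count 2) 2 + Multiset.replicate (s.count 4) 4) := by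
    ext a
    by_cases hm : a ∈ s
    · rcases mem234 a hm with rfl | rfl | rfl <;>
        simp [Multiset.count_add, Multiset.count_replicate]
    · have h0 := Multiset.count_eq_zero_of_notMem hm
      rw [h0, Multiset.count_add, Multiset.count_add, Multiset.count_replicate,
        Multiset.count_replicate, Multiset.count_replicate]
      by_cases h3 : a = 3
      · subst h3; norm_num; omega
      by_cases h2 : a = 2
      · subst h2; norm_num; omega
      by_cases h4 : a = 4
      · subst h4; norm_num; omega
      rw [if_neg (by omega), if_neg (by omega), if_neg (by omega)]
  refine ⟨s.count 3, ?_⟩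
  have h2c : s.count 2 = 0 ∨ s.count 2 = 1 ∨ s.count 2 = 2 := by omega
  have h4c : s.count 4 = 0 ∨ s.count 4 = 1 := by omega
  have h24 : s.count 2 = 0 ∨ s.count 4 = 0 := by
    by_contra hcon
    push_neg at hcon
    exact not42 ⟨Multiset.count_pos.mp (by omega), Multiset.count_pos.mp (by omega)⟩
  rcases h4c with h4c | h4c
  · rcases h2c with h2c | h2c | h2c
    · left; conv_lhs => rw [hdecomp]
      rw [h2c, h4c]; simp
    · right; left; conv_lhs => rw [hdecomp]
      rw [h2c, h4c]; simp
    · right; right; right; conv_lhs => rw [hdecomp]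
      rw [h2c, h4c]
      simp only [Multiset.replicate_succ, Multiset.replicate_zero, Multiset.replicate_one]
      rfl
  · have h2c : s.count 2 = 0 := by omega
    right; right; left; conv_lhs => rw [hdecomp]
    rw [h2c, h4c]; simp

lemma part_prod_le (n : ℕ) (mu : Nat.Partition n) : mu.parts.prod ≤ F n := by
  have h := prod_le_F mu.parts (fun x hx => mu.parts_pos hx)
  rwa [mu.parts_sum] at h

lemma part_classify (n : ℕ) (hn : 2 ≤ n) (lam : Nat.Partition n)
    (hge : F n ≤ lam.parts.prod) :
    ∃ k, lam.parts = Multiset.replicate k 3 ∨ lam.parts = Multiset.replicate k 3 + {2} ∨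
      lam.parts = Multiset.replicate k 3 + {4} ∨
      lam.parts = Multiset.replicate k 3 + {2, 2} := by
  refine classify lam.parts (fun x hx => lam.parts_pos hx) ?_ ?_
  · rw [lam.parts_sum]; exact hn
  · rw [lam.parts_sum]; exact hge

/-- The partitions of `n` achieving the maximum norm: for `n ≡ 1 (mod 3)`, `n > 1`, exactly
`⟨3^{(n-4)/3} 4⟩` and `⟨2² 3^{(n-4)/3}⟩`; for `n ≡ 0 (mod 3)`, `n ≥ 3`, uniquely `⟨3^{n/3}⟩`;
for `n ≡ 2 (mod 3)`, `n ≥ 2`, uniquely `⟨2 3^{(n-2)/3}⟩`. -/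
theorem max_norm_partition_classification (n : ℕ) :
    (n % 3 = 1 → 1 < n → ∀ lam : Nat.Partition n,
      ((∀ mu : Nat.Partition n, mu.parts.prod ≤ lam.parts.prod) ↔
        (lam.parts = Multiset.replicate ((n - 4) / 3) 3 + {4} ∨
         lam.parts = Multiset.replicate ((n - 4) / 3) 3 + {2, 2}))) ∧
    (n % 3 = 0 → 3 ≤ n → ∀ lam : Nat.Partition n,
      ((∀ mu : Nat.Partition n, mu.parts.prod ≤ lam.parts.prod) ↔
        lam.parts = Multiset.replicate (n / 3) 3)) ∧
    (n % 3 = 2 → ∀ lam : Nat.Partition n,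
      ((∀ mu : Nat.Partition n, mu.parts.prod ≤ lam.parts.prod) ↔
        lam.parts = Multiset.replicate ((n - 2) / 3) 3 + {2})) := by
  refine ⟨?_, ?_, ?_⟩
  · -- n % 3 = 1
    intro hmod hn lam
    have hk : n = 3 * ((n - 4) / 3) + 4 := by omega
    set k := (n - 4) / 3 with hkdef
    have hFn : F n = 4 * 3 ^ k := by rw [hk]; exact F_3k4 k
    have hprod1 : (Multiset.replicate k 3 + ({4} : Multiset ℕ)).prod = F n := by
      rw [Multiset.prod_add, Multiset.prod_replicate, Multiset.prod_singleton, hFn]; ring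
    have hprod2 : (Multiset.replicate k 3 + ({2, 2} : Multiset ℕ)).prod = F n := by
      rw [Multiset.prod_add, Multiset.prod_replicate, hFn]
      simp [Multiset.insert_eq_cons]
      ring
    constructor
    · intro hmax
      have hge : F n ≤ lam.parts.prod := by
        rw [← hprod1]
        refine hmax ⟨Multiset.replicate k 3 + {4}, ?_, ?_⟩
        · intro i hi
          rcases Multiset.mem_add.mp hi with h | h
          · rw [Multiset.eq_of_mem_replicate h]; norm_num
          · rw [Multiset.mem_singleton.mp h]; norm_num
        · rw [Multiset.sum_add, Multiset.sum_replicate, Multiset.sum_singleton,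
            smul_eq_mul]
          omega
      obtain ⟨k', hcase⟩ := part_classify n (by omega) lam hge
      have hsum := lam.parts_sum
      rcases hcase with h | h | h | h <;> rw [h] at hsum <;>
        simp [Multiset.sum_replicate, Multiset.insert_eq_cons] at hsum
      · omega
      · omega
      · left; rw [h]; have hkk : k' = k := by omega
        rw [hkk]
      · right; rw [h]; have hkk : k' = k := by omega
        rw [hkk]
    · rintro (h | h) mu <;> rw [h]
      · rw [hprod1]; exact part_prod_le n mu
      · rw [hprod2]; exact part_prod_le n mu
  · -- n % 3 = 0
    intro hmod hn lam
    have hk : n = 3 * (n / 3) := by omega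
    set k := n / 3 with hkdef
    have hFn : F n = 3 ^ k := by rw [hk]; exact F_3k k
    have hprod1 : (Multiset.replicate k 3 : Multiset ℕ).prod = F n := by
      rw [Multiset.prod_replicate, hFn]
    constructor
    · intro hmax
      have hge : F n ≤ lam.parts.prod := by
        rw [← hprod1]
        refine hmax ⟨Multiset.replicate k 3, ?_, ?_⟩
        · intro i hi
          rw [Multiset.eq_of_mem_replicate hi]; norm_num
        · rw [Multiset.sum_replicate, smul_eq_mul]; omega
      obtain ⟨k', hcase⟩ := part_classify n (by omega) lam hge
      have hsum := lam.parts_sum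
      rcases hcase with h | h | h | h <;> rw [h] at hsum <;>
        simp [Multiset.sum_replicate, Multiset.insert_eq_cons] at hsum
      · rw [h]; have hkk : k' = k := by omega
        rw [hkk]
      · omega
      · omega
      · omega
    · intro h mu
      rw [h, hprod1]; exact part_prod_le n mu
  · -- n % 3 = 2
    intro hmod lam
    have hk : n = 3 * ((n - 2) / 3) + 2 := by omega
    set k := (n - 2) / 3 with hkdef
    have hFn : F n = 2 * 3 ^ k := by rw [hk]; exact F_3k2 k
    have hprod1 : (Multiset.replicate k 3 + ({2} : Multiset ℕ)).prod = F n := by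
      rw [Multiset.prod_add, Multiset.prod_replicate, Multiset.prod_singleton, hFn]; ring
    constructor
    · intro hmax
      have hge : F n ≤ lam.parts.prod := by
        rw [← hprod1]
        refine hmax ⟨Multiset.replicate k 3 + {2}, ?_, ?_⟩
        · intro i hi
          rcases Multiset.mem_add.mp hi with h | h
          · rw [Multiset.eq_of_mem_replicate h]; norm_num
          · rw [Multiset.mem_singleton.mp h]; norm_num
        · rw [Multiset.sum_add, Multiset.sum_replicate, Multiset.sum_singleton,
            smul_eq_mul]
          omega
      obtain ⟨k', hcase⟩ := part_classify n (by omega) lam hge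
      have hsum := lam.parts_sum
      rcases hcase with h | h | h | h <;> rw [h] at hsum <;>
        simp [Multiset.sum_replicate, Multiset.insert_eq_cons] at hsum
      · omega
      · rw [h]; have hkk : k' = k := by omega
        rw [hkk]
      · omega
      · omega
    · intro h mu
      rw [h, hprod1]; exact part_prod_le n mu
end

section
/- (Došlić) Among all partitions of n ≥ 3 into odd parts, the maximum product of parts is: 3^{n/3} if n ≡ 0 (mod 3); 3^{(n-1)/3} if n ≡ 1 (mod 3) (achieved by ⟨1 · 3^{(n-1)/3}⟩); and 5·3^{(n-5)/3} if n ≡ 2 (mod 3). -/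
def f : ℕ → ℕ
  | 0 => 1
  | 1 => 1
  | 2 => 1
  | 3 => 3
  | 4 => 3
  | 5 => 5
  | (n+6) => 3 * f (n+3)

theorem f_add6 (n : ℕ) : f (n+6) = 3 * f (n+3) := rfl

theorem f_mul_aux : ∀ n x y, x + y = n → f x * f y ≤ f n := by
  intro n
  induction n using Nat.strong_induction_on with
  | _ n IH =>
    intro x y hxy
    rcases le_or_gt x 5 with hx | hx
    · rcases le_or_gt y 5 with hy | hy
      · subst hxy; interval_cases x <;> interval_cases y <;> decide
      · obtain ⟨m, rfl⟩ : ∃ m, y = m + 6 := ⟨y - 6, by omega⟩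
        have IH' := IH (x + (m+3)) (by omega) x (m+3) rfl
        calc f x * f (m+6) = 3 * (f x * f (m+3)) := by rw [f_add6]; ring
          _ ≤ 3 * f (x+(m+3)) := Nat.mul_le_mul_left _ IH'
          _ = f n := by
              rw [show x+(m+3) = (x+m)+3 by ring, ← f_add6, show (x+m)+6 = n by omega]
    · obtain ⟨m, rfl⟩ : ∃ m, x = m + 6 := ⟨x - 6, by omega⟩
      have IH' := IH ((m+3) + y) (by omega) (m+3) y rfl
      calc f (m+6) * f y = 3 * (f (m+3) * f y) := by rw [f_add6]; ring
        _ ≤ 3 * f ((m+3)+y) := Nat.mul_le_mul_left _ IH'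
        _ = f n := by
            rw [show (m+3)+y = (m+y)+3 by ring, ← f_add6, show (m+y)+6 = n by omega]

theorem f_mul (x y : ℕ) : f x * f y ≤ f (x + y) := f_mul_aux _ x y rfl

theorem odd_le_f : ∀ a, Odd a → a ≤ f a := by
  intro a
  induction a using Nat.strong_induction_on with
  | _ a IH =>
    intro ha
    rcases le_or_gt a 8 with h | h
    · rw [Nat.odd_iff] at ha
      interval_cases a <;> simp_all <;> decide
    · obtain ⟨k, rfl⟩ : ∃ k, a = k + 9 := ⟨a - 9, by omega⟩
      have hk : Odd (k + 3) := by
        rw [Nat.odd_iff] at ha ⊢; omega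
      have := IH (k+3) (by omega) hk
      have e : f (k+9) = 9 * f (k+3) := by
        rw [show k+9 = (k+3)+6 by ring, f_add6, f_add6]; ring
      omega

theorem prod_le_f (s : Multiset ℕ) (h : ∀ a ∈ s, Odd a) : s.prod ≤ f s.sum := by
  induction s using Multiset.induction with
  | empty => simp [f]
  | cons a s IH =>
    simp only [Multiset.prod_cons, Multiset.sum_cons]
    calc a * s.prod ≤ f a * f s.sum :=
          Nat.mul_le_mul (odd_le_f a (h a (Multiset.mem_cons_self a s)))
            (IH fun b hb => h b (Multiset.mem_cons_of_mem hb))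
      _ ≤ f (a + s.sum) := f_mul _ _

theorem fk (k : ℕ) : f (3*k+3) = 3^(k+1) ∧ f (3*k+4) = 3^(k+1) ∧ f (3*k+5) = 5*3^k := by
  induction k with
  | zero => decide
  | succ k IH =>
    obtain ⟨h1, h2, h3⟩ := IH
    refine ⟨?_, ?_, ?_⟩
    · rw [show 3*(k+1)+3 = 3*k+6 by ring, f_add6, h1]; ring
    · rw [show 3*(k+1)+4 = (3*k+1)+6 by ring, f_add6, show 3*k+1+3 = 3*k+4 by ring, h2]
      ring
    · rw [show 3*(k+1)+5 = (3*k+2)+6 by ring, f_add6, show 3*k+2+3 = 3*k+5 by ring, h3]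
      ring

/-- (Došlić) Among all partitions of `n ≥ 3` into odd parts, the maximum product of parts is
`3^{n/3}` if `n ≡ 0 (mod 3)`, `3^{(n-1)/3}` if `n ≡ 1 (mod 3)`, and `5·3^{(n-5)/3}` if
`n ≡ 2 (mod 3)`. -/
theorem max_norm_odd_partition (n : ℕ) (hn : 3 ≤ n) :
    (n % 3 = 0 → IsGreatest
        {m | ∃ lam : Nat.Partition n, (∀ a ∈ lam.parts, Odd a) ∧ lam.parts.prod = m}
        (3 ^ (n / 3))) ∧
    (n % 3 = 1 → IsGreatest
        {m | ∃ lam : Nat.Partition n, (∀ a ∈ lam.parts, Odd a) ∧ lam.parts.prod = m}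
        (3 ^ ((n - 1) / 3))) ∧
    (n % 3 = 2 → IsGreatest
        {m | ∃ lam : Nat.Partition n, (∀ a ∈ lam.parts, Odd a) ∧ lam.parts.prod = m}
        (5 * 3 ^ ((n - 5) / 3))) := by
  refine ⟨fun hr => ?_, fun hr => ?_, fun hr => ?_⟩
  · obtain ⟨k, rfl⟩ : ∃ k, n = 3*k+3 := ⟨n/3 - 1, by omega⟩
    have e : (3*k+3)/3 = k+1 := by omega
    constructor
    · refine ⟨⟨Multiset.replicate (k+1) 3, ?_, ?_⟩, ?_, ?_⟩
      · intro i hi; rw [Multiset.eq_of_mem_replicate hi]; norm_num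
      · simp [Multiset.sum_replicate]; omega
      · intro a ha; rw [Multiset.eq_of_mem_replicate ha]; decide
      · simp [Multiset.prod_replicate, e, pow_succ] <;> ring
    · rintro m ⟨lam, hodd, rfl⟩
      have h := prod_le_f lam.parts hodd
      rw [lam.parts_sum] at h
      have hf := (fk k).1
      rw [e]; omega
  · obtain ⟨k, rfl⟩ : ∃ k, n = 3*k+4 := ⟨(n-1)/3 - 1, by omega⟩
    have e : (3*k+4-1)/3 = k+1 := by omega
    constructor
    · refine ⟨⟨1 ::ₘ Multiset.replicate (k+1) 3, ?_, ?_⟩, ?_, ?_⟩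
      · intro i hi
        rcases Multiset.mem_cons.mp hi with h | h
        · omega
        · rw [Multiset.eq_of_mem_replicate h]; norm_num
      · simp [Multiset.sum_replicate]; omega
      · intro a ha
        simp only [Multiset.mem_cons, Multiset.mem_replicate] at ha
        rcases ha with rfl | ⟨-, rfl⟩ <;> decide
      · simp [Multiset.prod_replicate, e, pow_succ] <;> ring
    · rintro m ⟨lam, hodd, rfl⟩
      have h := prod_le_f lam.parts hodd
      rw [lam.parts_sum] at h
      have hf := (fk k).2.1
      rw [e]; omega
  · obtain ⟨k, rfl⟩ : ∃ k, n = 3*k+5 := ⟨(n-5)/3, by omega⟩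
    have e : (3*k+5-5)/3 = k := by omega
    constructor
    · refine ⟨⟨5 ::ₘ Multiset.replicate k 3, ?_, ?_⟩, ?_, ?_⟩
      · intro i hi
        rcases Multiset.mem_cons.mp hi with h | h
        · omega
        · rw [Multiset.eq_of_mem_replicate h]; norm_num
      · simp [Multiset.sum_replicate]; omega
      · intro a ha
        simp only [Multiset.mem_cons, Multiset.mem_replicate] at ha
        rcases ha with rfl | ⟨-, rfl⟩ <;> decide
      · simp [Multiset.prod_replicate, e, pow_succ] <;> ring
    · rintro m ⟨lam, hodd, rfl⟩
      have h := prod_le_f lam.parts hodd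
      rw [lam.parts_sum] at h
      have hf := (fk k).2.2
      rw [e]; omega
end

section
/- (Došlić) Write n ≥ 2 uniquely as n = T_k + j where T_k = k(k+1)/2 and -1 ≤ j ≤ k - 2. Then among partitions of n into distinct parts (all parts ≥ 1, pairwise distinct), the maximum product of parts equals (k+1)!/(k-j), achieved by the partition consisting of one copy each of 2, 3, ..., k+1 with the part k - j omitted. -/
open Finset

lemma Icc_succ_insert (m : ℕ) (hm : 1 ≤ m) :
    Icc 2 (m+1) = insert (m+1) (Icc 2 m) := by
  ext x; simp only [mem_Icc, mem_insert]; omega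

lemma sum_Icc_two (m : ℕ) (hm : 1 ≤ m) : 2 * ((Icc 2 m).sum id) + 2 = m * (m+1) := by
  induction m with
  | zero => omega
  | succ m ih =>
    rcases Nat.lt_or_ge 1 (m+1) with h | h
    · have hm1 : 1 ≤ m := by omega
      rw [Icc_succ_insert m hm1, Finset.sum_insert (by simp [mem_Icc])]
      have := ih hm1
      simp only [id] at this ⊢
      nlinarith [this]
    · have : m = 0 := by omega
      subst this
      decide

lemma prod_Icc_two (m : ℕ) : (Icc 2 m).prod id = Nat.factorial m := by
  induction m with
  | zero => decide
  | succ m ih =>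
    rcases Nat.lt_or_ge m 1 with h | h
    · interval_cases m
      · decide
    · rw [Icc_succ_insert m h, Finset.prod_insert (by simp [mem_Icc]), Nat.factorial_succ, ih]
      rfl

lemma exchange {S A B : Finset ℕ} (h0 : 0 ∉ S) (hA : A ⊆ S) (hB : ∀ x ∈ B, x ∉ S)
    (h0B : 0 ∉ B) (hsum : A.sum id = B.sum id) (hlt : A.prod id < B.prod id) :
    ∃ T : Finset ℕ, 0 ∉ T ∧ T.sum id = S.sum id ∧ S.prod id < T.prod id := by
  have hdisj : Disjoint (S \ A) B := by
    rw [disjoint_right]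
    intro x hxB hxS
    exact hB x hxB (mem_sdiff.1 hxS).1
  refine ⟨(S \ A) ∪ B, ?_, ?_, ?_⟩
  · intro h
    rcases mem_union.1 h with h | h
    · exact h0 (mem_sdiff.1 h).1
    · exact h0B h
  · have h2 : ((S \ A) ∪ B).sum id = (S \ A).sum id + B.sum id := Finset.sum_union hdisj
    have h1 : (S \ A).sum id + A.sum id = S.sum id := Finset.sum_sdiff hA
    omega
  · have h2 : ((S \ A) ∪ B).prod id = (S \ A).prod id * B.prod id := Finset.prod_union hdisj
    rw [h2]
    have h1 : (S \ A).prod id * A.prod id = S.prod id := Finset.prod_sdiff hA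
    have hpos : 0 < (S \ A).prod id := by
      apply Finset.prod_pos
      intro i hi
      have h2' : i ∈ S := (mem_sdiff.1 hi).1
      have h3 : i ≠ 0 := fun h => h0 (h ▸ h2')
      simpa using Nat.pos_of_ne_zero h3
    rw [← h1]
    exact mul_lt_mul_of_pos_left hlt hpos

lemma Tmono {a b : ℤ} (h : a ≤ b) (h0 : 0 ≤ a) : a*(a+1) ≤ b*(b+1) := by nlinarith

set_option maxHeartbeats 2000000 in
lemma key (n k : ℕ) (j : ℤ) (hn : 2 ≤ n) (hj1 : -1 ≤ j) (hj2 : j ≤ (k:ℤ) - 2)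
    (h2n : 2*(n:ℤ) = k*(k+1) + 2*j) :
    ∀ S : Finset ℕ, 0 ∉ S → S.sum id = n →
      S.prod id ≤ ((Icc 2 (k+1)).erase ((k:ℤ)-j).toNat).prod id := by
  classical
  have hk2 : 2 ≤ k := by
    by_contra hc
    push_neg at hc
    interval_cases k <;> (norm_num at h2n; omega)
  set hh : ℕ := ((k:ℤ)-j).toNat with hhdef
  have hhZ : (hh:ℤ) = (k:ℤ) - j := Int.toNat_of_nonneg (by omega)
  have hh2 : 2 ≤ hh := by omega
  have hhk : hh ≤ k+1 := by omega
  set C : Finset ℕ := (Icc 2 (k+1)).erase hh with hCdef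
  have hmemIcc : hh ∈ Icc 2 (k+1) := by simp only [mem_Icc]; omega
  have hsumIcck : 2 * ((Icc 2 (k+1)).sum id) + 2 = (k+1) * (k+2) := by
    have := sum_Icc_two (k+1) (by omega)
    nlinarith [this]
  have hCsum' : hh + C.sum id = (Icc 2 (k+1)).sum id := by
    have := Finset.add_sum_erase (Icc 2 (k+1)) id hmemIcc
    simpa using this
  have hCsum : C.sum id = n := by
    set SI : ℕ := (Icc 2 (k+1)).sum id with hSIdef
    set SC : ℕ := C.sum id with hSCdef
    have h1 : 2 * ((SI:ℕ):ℤ) + 2 = ((k:ℤ)+1) * ((k:ℤ)+2) := by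
      push_cast
      exact_mod_cast hsumIcck
    have h2 : (hh:ℤ) + ((SC:ℕ):ℤ) = ((SI:ℕ):ℤ) := by exact_mod_cast hCsum'
    have hq : ((k:ℤ)+1)*((k:ℤ)+2) = (k:ℤ)*((k:ℤ)+1) + 2*((k:ℤ)+1) := by ring
    have : ((SC:ℕ) : ℤ) = (n:ℤ) := by linarith
    exact_mod_cast this
  have hCvalid0 : (0:ℕ) ∉ C := by
    intro h
    have := mem_of_mem_erase h
    simp [mem_Icc] at this
  clear_value hh
  intro S0 hS00 hS0sum
  set P : Finset (Finset ℕ) := (range (n+1)).powerset.filter (fun S => 0 ∉ S ∧ S.sum id = n)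
    with hPdef
  have hmemP : ∀ S : Finset ℕ, 0 ∉ S → S.sum id = n → S ∈ P := by
    intro S h0 hsum
    simp only [hPdef, mem_filter, mem_powerset]
    refine ⟨?_, h0, hsum⟩
    intro x hx
    have h1 : x ≤ S.sum id := Finset.single_le_sum (f := id) (by intro i _; exact Nat.zero_le _) hx
    simp only [mem_range]
    omega
  obtain ⟨S, hSP, hSmax⟩ := Finset.exists_max_image P (fun S => S.prod id)
    ⟨C, hmemP C hCvalid0 hCsum⟩
  obtain ⟨hS0, hSsum⟩ : 0 ∉ S ∧ S.sum id = n := (mem_filter.1 hSP).2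
  have hmax : ∀ T : Finset ℕ, 0 ∉ T → T.sum id = n → T.prod id ≤ S.prod id :=
    fun T h0 hs => hSmax T (hmemP T h0 hs)
  suffices hSC : S = C by
    have := hmax S0 hS00 hS0sum
    rwa [hSC] at this
  have noimp : ∀ A B : Finset ℕ, A ⊆ S → (∀ x ∈ B, x ∉ S) → 0 ∉ B →
      A.sum id = B.sum id → A.prod id < B.prod id → False := by
    intro A B hA hB h0B hsum hlt
    obtain ⟨T, hT0, hTsum, hTlt⟩ := exchange hS0 hA hB h0B hsum hlt
    have := hmax T hT0 (by rw [hTsum, hSsum])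
    omega
  clear hSmax hSP hmemP
  clear_value P
  clear hPdef P
  clear_value C
  have hSne : S.Nonempty := by
    rcases S.eq_empty_or_nonempty with h | h
    · exfalso
      rw [h] at hSsum
      simp at hSsum
      omega
    · exact h
  set m := S.max' hSne with hmdef
  have hmS : m ∈ S := S.max'_mem hSne
  have hle_m : ∀ x ∈ S, x ≤ m := fun x hx => S.le_max' x hx
  have hmax'_le : ∀ x, (∀ y ∈ S, y ≤ x) → m ≤ x := fun x h => Finset.max'_le _ _ _ h
  clear_value m
  have h1S : 1 ∉ S := by
    intro h1
    have hm2 : 2 ≤ m := by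
      by_contra hc
      push_neg at hc
      have hSeq : S = {1} := by
        apply Finset.Subset.antisymm
        · intro x hx
          have h2 := hle_m x hx
          have hx0 : x ≠ 0 := fun h => hS0 (h ▸ hx)
          simp only [mem_singleton]
          omega
        · simp [h1]
      rw [hSeq] at hSsum
      simp at hSsum
      omega
    refine noimp {1, m} {m+1} ?_ ?_ (by simp) ?_ ?_
    · intro x hx
      simp only [mem_insert, mem_singleton] at hx
      rcases hx with rfl | rfl
      exacts [h1, hmS]
    · intro x hx
      simp only [mem_singleton] at hx
      subst hx
      intro hmem
      have := hle_m _ hmem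
      omega
    · rw [Finset.sum_pair (by omega)]
      simp only [id, sum_singleton]
      omega
    · rw [Finset.prod_pair (by omega)]
      simp only [id, prod_singleton]
      omega
  have hS2 : ∀ x ∈ S, 2 ≤ x := by
    intro x hx
    have hx0 : x ≠ 0 := fun h => hS0 (h ▸ hx)
    have hx1 : x ≠ 1 := fun h => h1S (h ▸ hx)
    omega
  have hm2 : 2 ≤ m := hS2 m hmS
  have hSub : S ⊆ Icc 2 m := fun x hx => mem_Icc.2 ⟨hS2 x hx, hle_m x hx⟩
  set H : Finset ℕ := Icc 2 m \ S with hHdef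
  have hHfact : ∀ x, x ∈ H ↔ (2 ≤ x ∧ x ≤ m ∧ x ∉ S) := by
    intro x
    simp only [hHdef, mem_sdiff, mem_Icc]
    tauto
  have hfill : ∀ x, 2 ≤ x → x ≤ m → x ∉ H → x ∈ S := by
    intro x h2 hxm hH
    by_contra hxS
    exact hH ((hHfact x).2 ⟨h2, hxm, hxS⟩)
  have hmH : m ∉ H := fun h => ((hHfact m).1 h).2.2 hmS
  have hHsub : H ⊆ Icc 2 m := sdiff_subset
  have hIccS : Icc 2 m \ H = S := by
    rw [hHdef, sdiff_sdiff_right_self]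
    exact inter_eq_right.mpr hSub
  have hHmax_mem : ∀ (hne : H.Nonempty), H.max' hne ∈ H := fun hne => H.max'_mem hne
  have hsum_split : n + H.sum id = (Icc 2 m).sum id := by
    have h1 : (Icc 2 m \ H).sum id + H.sum id = (Icc 2 m).sum id := Finset.sum_sdiff hHsub
    rw [hIccS, hSsum] at h1
    exact h1
  have hsumIccm : 2 * ((Icc 2 m).sum id) + 2 = m * (m+1) := sum_Icc_two m (by omega)
  have key1 : 2*n + 2*(H.sum id) + 2 = m*(m+1) := by
    have := hsum_split
    nlinarith [hsumIccm]
  have hcard : H.card ≤ 1 := by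
    by_contra hc
    push_neg at hc
    have hHne : H.Nonempty := Finset.card_pos.1 (by omega)
    set q := H.max' hHne with hqdef
    set p := H.min' hHne with hpdef
    have hqH : q ∈ H := H.max'_mem hHne
    have hpH : p ∈ H := H.min'_mem hHne
    have hpq : p < q := Finset.min'_lt_max'_of_card H hc
    have hq_ub : ∀ x ∈ H, x ≤ q := fun x hx => H.le_max' x hx
    have hp_lb : ∀ x ∈ H, p ≤ x := fun x hx => H.min'_le x hx
    clear_value q p
    have hq2 : 2 ≤ q := ((hHfact q).1 hqH).1
    have hqm : q ≤ m := ((hHfact q).1 hqH).2.1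
    have hqm' : q < m := lt_of_le_of_ne hqm (fun h => hmH (h ▸ hqH))
    have hq1S : q + 1 ∈ S := by
      apply hfill _ (by omega) (by omega)
      intro hq1H
      have := hq_ub _ hq1H
      omega
    have hp2 : 2 ≤ p := ((hHfact p).1 hpH).1
    have hpS : p ∉ S := ((hHfact p).1 hpH).2.2
    have hqS : q ∉ S := ((hHfact q).1 hqH).2.2
    have moveA : ∀ u v : ℕ, 3 ≤ u → u < v → u ∉ S → v ∉ S → (u-1) ∈ S → (v+1) ∈ S → False := by
      intro u v hu3 huv huS hvS hu1S hv1S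
      refine noimp {u-1, v+1} {u, v} ?_ ?_ (by simp; omega) ?_ ?_
      · intro x hx
        simp only [mem_insert, mem_singleton] at hx
        rcases hx with rfl | rfl
        exacts [hu1S, hv1S]
      · intro x hx
        simp only [mem_insert, mem_singleton] at hx
        rcases hx with rfl | rfl
        exacts [huS, hvS]
      · rw [Finset.sum_pair (by omega), Finset.sum_pair (by omega)]
        simp only [id]
        omega
      · rw [Finset.prod_pair (by omega), Finset.prod_pair (by omega)]
        simp only [id]
        obtain ⟨a, rfl⟩ : ∃ a, u = a + 3 := ⟨u - 3, by omega⟩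
        have h1 : a + 3 - 1 = a + 2 := by omega
        rw [h1]
        have h2 : (a+2)*(v+1) = (a+2)*v + (a+2) := by ring
        have h3 : (a+3)*v = (a+2)*v + v := by ring
        linarith
    rcases le_or_gt 3 p with hp3 | hp3
    · have hp1S : p - 1 ∈ S := by
        apply hfill _ (by omega) (by omega)
        intro hmem
        have := hp_lb _ hmem
        omega
      exact moveA p q hp3 hpq hpS hqS hp1S hq1S
    · have hp2' : p = 2 := by omega
      have h2H : (2:ℕ) ∈ H := hp2' ▸ hpH
      have h2S : (2:ℕ) ∉ S := ((hHfact 2).1 h2H).2.2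
      have hqH' : q ∈ H.erase 2 := Finset.mem_erase.2 ⟨by omega, hqH⟩
      have hH'ne : (H.erase 2).Nonempty := ⟨q, hqH'⟩
      set p' := (H.erase 2).min' hH'ne with hp'def
      have hp'mem : p' ∈ H.erase 2 := Finset.min'_mem _ _
      have hp'_lb : ∀ x ∈ H.erase 2, p' ≤ x := fun x hx => Finset.min'_le _ x hx
      have hp'H : p' ∈ H := Finset.mem_of_mem_erase hp'mem
      have hp'ne2 : p' ≠ 2 := (Finset.mem_erase.1 hp'mem).1
      have hp'3 : 3 ≤ p' := by
        have := ((hHfact p').1 hp'H).1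
        omega
      have hp'q : p' ≤ q := hp'_lb _ hqH'
      have hp'S : p' ∉ S := ((hHfact p').1 hp'H).2.2
      clear_value p'
      rcases le_or_gt 4 p' with hp'4 | hp'4
      · have hp'1S : p' - 1 ∈ S := by
          apply hfill _ (by omega) (by omega)
          intro hmem
          have h3 : p' - 1 ≠ 2 := by omega
          have h4 : p' - 1 ∈ H.erase 2 := Finset.mem_erase.2 ⟨h3, hmem⟩
          have := hp'_lb _ h4
          omega
        rcases lt_or_eq_of_le hp'q with hlt | heq
        · exact moveA p' q (by omega) hlt hp'S hqS hp'1S hq1S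
        · rcases le_or_gt (q+2) m with hq2m | hq2m
          · have hq2S : q + 2 ∈ S := by
              apply hfill _ (by omega) hq2m
              intro hmem
              have := hq_ub _ hmem
              omega
            refine noimp {q+2} {2, q} (by simp [hq2S]) ?_ (by simp; omega) ?_ ?_
            · intro x hx
              simp only [mem_insert, mem_singleton] at hx
              rcases hx with rfl | rfl
              exacts [h2S, hqS]
            · rw [Finset.sum_pair (by omega)]
              simp only [id, sum_singleton]
              omega
            · rw [Finset.prod_pair (by omega)]
              simp only [id, prod_singleton]
              omega
          · -- q = m-1, H = {2, q}, n = T_{m-1} - 2 : contradiction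
            have hHeq : H = {2, q} := by
              ext x
              simp only [mem_insert, mem_singleton]
              constructor
              · intro hx
                by_cases hx2 : x = 2
                · exact Or.inl hx2
                · right
                  have hxe : x ∈ H.erase 2 := Finset.mem_erase.2 ⟨hx2, hx⟩
                  have h1 := hp'_lb _ hxe
                  have h2 := hq_ub _ hx
                  omega
              · intro hx
                rcases hx with rfl | rfl
                exacts [h2H, hqH]
            have hHsumv : H.sum id = 2 + q := by
              rw [hHeq, Finset.sum_pair (by omega)]
              rfl
            have hqm1 : q = m - 1 := by omega
            have hm5 : 5 ≤ m := by omega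
            -- 2n + 2(2 + (m-1)) + 2 = m(m+1)  → 2n + 2m + 4 = m² + m
            have keyz : 2*(n:ℤ) + 2*(m:ℤ) + 4 = (m:ℤ)*(m:ℤ) + (m:ℤ) := by
              have c1 : 2*n + 2*(2 + q) + 2 = m*(m+1) := by rw [← hHsumv]; exact key1
              have c2 : (2:ℤ)*n + 2*(2 + (q:ℤ)) + 2 = (m:ℤ)*((m:ℤ)+1) := by exact_mod_cast c1
              have c3 : (q:ℤ) = (m:ℤ) - 1 := by omega
              have e0 : (m:ℤ)*((m:ℤ)+1) = (m:ℤ)*(m:ℤ) + (m:ℤ) := by ring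
              linarith
            rcases le_or_gt ((m:ℤ)-1) ((k:ℤ)) with hmk | hmk
            · have hT := Tmono hmk (by omega)
              have e1 : ((m:ℤ)-1)*(((m:ℤ)-1)+1) = (m:ℤ)*(m:ℤ) - (m:ℤ) := by ring
              linarith
            · have hT := Tmono (show (k:ℤ)+1 ≤ (m:ℤ)-1 by omega) (by positivity)
              have e1 : ((m:ℤ)-1)*(((m:ℤ)-1)+1) = (m:ℤ)*(m:ℤ) - (m:ℤ) := by ring
              have e2 : ((k:ℤ)+1)*(((k:ℤ)+1)+1) = (k:ℤ)*((k:ℤ)+1) + 2*(k:ℤ) + 2 := by ring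
              linarith
      · -- p' = 3
        have hp'eq : p' = 3 := by omega
        have h3H : (3:ℕ) ∈ H := hp'eq ▸ hp'H
        have h3S : (3:ℕ) ∉ S := ((hHfact 3).1 h3H).2.2
        set s := S.min' hSne with hsdef
        have hsS : s ∈ S := S.min'_mem hSne
        have hs_le : ∀ x ∈ S, s ≤ x := fun x hx => S.min'_le x hx
        clear_value s
        have hs4 : 4 ≤ s := by
          have h1 := hS2 s hsS
          have hne2 : s ≠ 2 := fun h => h2S (h ▸ hsS)
          have hne3 : s ≠ 3 := fun h => h3S (h ▸ hsS)
          omega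
        rcases le_or_gt 5 s with hs5 | hs5
        · refine noimp {s} {2, s-2} (by simp [hsS]) ?_ (by simp; omega) ?_ ?_
          · intro x hx
            simp only [mem_insert, mem_singleton] at hx
            rcases hx with rfl | rfl
            · exact h2S
            · intro hmem
              have := hs_le _ hmem
              omega
          · rw [Finset.sum_pair (by omega)]
            simp only [id, sum_singleton]
            omega
          · rw [Finset.prod_pair (by omega)]
            simp only [id, prod_singleton]
            omega
        · have hs4' : s = 4 := by omega
          have h4S : (4:ℕ) ∈ S := hs4' ▸ hsS
          by_cases h5S : (5:ℕ) ∈ S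
          · refine noimp {5} {2, 3} (by simp [h5S]) ?_ (by simp) ?_ ?_
            · intro x hx
              simp only [mem_insert, mem_singleton] at hx
              rcases hx with rfl | rfl
              exacts [h2S, h3S]
            · rw [Finset.sum_pair (by omega)]
              simp only [id, sum_singleton]
            · rw [Finset.prod_pair (by omega)]
              simp only [id, prod_singleton]
              omega
          · have hm4 : 4 ≤ m := hle_m 4 h4S
            have hmne5 : m ≠ 5 := fun h => h5S (h ▸ hmS)
            rcases (show 6 ≤ m ∨ m = 4 by omega) with hm6 | hm4'
            · have h5H : (5:ℕ) ∈ H := (hHfact 5).2 ⟨by omega, by omega, h5S⟩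
              have h5q : 5 ≤ q := hq_ub _ h5H
              rcases lt_or_eq_of_le h5q with h5q' | h5q'
              · exact moveA 5 q (by omega) h5q' h5S hqS (by simpa using h4S) hq1S
              · have h7 : ∀ x, 6 ≤ x → x ≤ m → x ∈ S := by
                  intro x h6 hxm
                  apply hfill x (by omega) hxm
                  intro hmem
                  have := hq_ub _ hmem
                  omega
                rcases le_or_gt 7 m with hm7 | hm7
                · have h7S : (7:ℕ) ∈ S := h7 7 (by omega) hm7
                  refine noimp {7} {2, 5} (by simp [h7S]) ?_ (by simp) ?_ ?_
                  · intro x hx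
                    simp only [mem_insert, mem_singleton] at hx
                    rcases hx with rfl | rfl
                    exacts [h2S, h5S]
                  · rw [Finset.sum_pair (by omega)]
                    simp only [id, sum_singleton]
                  · rw [Finset.prod_pair (by omega)]
                    simp only [id, prod_singleton]
                    omega
                · have hm6' : m = 6 := by omega
                  have h6S : (6:ℕ) ∈ S := hm6' ▸ hmS
                  refine noimp {4, 6} {2, 3, 5} ?_ ?_ (by simp) ?_ ?_
                  · intro x hx
                    simp only [mem_insert, mem_singleton] at hx
                    rcases hx with rfl | rfl
                    exacts [h4S, h6S]
                  · intro x hx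
                    simp only [mem_insert, mem_singleton] at hx
                    rcases hx with rfl | rfl | rfl
                    exacts [h2S, h3S, h5S]
                  · rw [Finset.sum_pair (by omega)]
                    simp only [id]
                    decide
                  · rw [Finset.prod_pair (by omega)]
                    simp only [id]
                    decide
            · -- m = 4 : S = {4}, n = 4, contradiction
              have hSeq : S = {4} := by
                apply Finset.Subset.antisymm
                · intro x hx
                  have h2x := hS2 x hx
                  have hxm := hle_m x hx
                  have hx2 : x ≠ 2 := fun h => h2S (h ▸ hx)
                  have hx3 : x ≠ 3 := fun h => h3S (h ▸ hx)
                  simp only [mem_singleton]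
                  omega
                · simp [h4S]
              have hn4 : n = 4 := by
                rw [← hSsum, hSeq]
                rfl
              rcases le_or_gt ((k:ℤ)) 2 with hk | hk
              · have hkk : (k:ℤ) = 2 := by
                  have : (2:ℤ) ≤ (k:ℤ) := by exact_mod_cast hk2
                  omega
                rw [hkk] at h2n hj2
                omega
              · have hT := Tmono (show (3:ℤ) ≤ (k:ℤ) by omega) (by norm_num)
                norm_num at hT
                have : (2:ℤ)*(n:ℤ) = 8 := by rw [hn4]; norm_num
                linarith
  have hk2' : (2:ℤ) ≤ (k:ℤ) := by exact_mod_cast hk2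
  rcases Nat.le_one_iff_eq_zero_or_eq_one.1 hcard with h0 | h1
  · -- H = ∅ : S = Icc 2 m, j = -1
    have hHe : H = ∅ := Finset.card_eq_zero.1 h0
    have hSIcc : S = Icc 2 m := by rw [← hIccS, hHe, sdiff_empty]
    have hHs : H.sum id = 0 := by rw [hHe]; rfl
    rw [hHs] at key1
    have c2 : 2*(n:ℤ) + 2 = (m:ℤ)*((m:ℤ)+1) := by
      have := key1
      push_cast at this
      linarith
    have hmk : (m:ℤ) = k := by
      rcases lt_trichotomy ((m:ℤ)) ((k:ℤ)) with hlt | heq | hgt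
      · exfalso
        have hT := Tmono (show (m:ℤ) ≤ (k:ℤ)-1 by omega) (by positivity)
        have e1 : ((k:ℤ)-1)*(((k:ℤ)-1)+1) = (k:ℤ)*((k:ℤ)+1) - 2*(k:ℤ) := by ring
        linarith
      · exact heq
      · exfalso
        have hT := Tmono (show (k:ℤ)+1 ≤ (m:ℤ) by omega) (by positivity)
        have e2 : ((k:ℤ)+1)*(((k:ℤ)+1)+1) = (k:ℤ)*((k:ℤ)+1) + 2*(k:ℤ) + 2 := by ring
        linarith
    have hjm : j = -1 := by
      rw [hmk] at c2
      linarith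
    have hhval : hh = k+1 := by omega
    have hmk' : m = k := by exact_mod_cast hmk
    rw [hSIcc, hCdef, hhval, Finset.Icc_erase_right, Finset.Ico_add_one_right_eq_Icc, hmk']
  · -- H = {ho} : S = (Icc 2 m).erase ho, m = k+1, ho = k-j
    obtain ⟨ho, hHe⟩ := Finset.card_eq_one.1 h1
    have hhoH : ho ∈ H := by rw [hHe]; exact mem_singleton_self ho
    obtain ⟨hho2, hhom, hhoS⟩ := (hHfact ho).1 hhoH
    have hne_m : ho ≠ m := fun e => hmH (e ▸ hhoH)
    have hHs : H.sum id = ho := by rw [hHe]; rfl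
    rw [hHs] at key1
    have c2 : 2*(n:ℤ) + 2*(ho:ℤ) + 2 = (m:ℤ)*((m:ℤ)+1) := by
      have := key1
      push_cast at this
      linarith
    have hmk : (m:ℤ) = (k:ℤ)+1 := by
      rcases lt_trichotomy ((m:ℤ)) ((k:ℤ)+1) with hlt | heq | hgt
      · exfalso
        have hT := Tmono (show (m:ℤ) ≤ (k:ℤ) by omega) (by positivity)
        linarith
      · exact heq
      · exfalso
        have hT := Tmono (show (k:ℤ)+1 ≤ (m:ℤ)-1 by omega) (by positivity)
        have e1 : ((m:ℤ)-1)*(((m:ℤ)-1)+1) = (m:ℤ)*((m:ℤ)+1) - 2*(m:ℤ) := by ring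
        have e2 : ((k:ℤ)+1)*(((k:ℤ)+1)+1) = (k:ℤ)*((k:ℤ)+1) + 2*(k:ℤ) + 2 := by ring
        linarith
    have hhoZ : (ho:ℤ) = (k:ℤ) - j := by
      rw [hmk] at c2
      have e : ((k:ℤ)+1)*((k:ℤ)+1+1) = (k:ℤ)*((k:ℤ)+1) + 2*((k:ℤ)+1) := by ring
      linarith
    have hhval : hh = ho := by omega
    have hSerase : S = (Icc 2 m).erase ho := by
      rw [← hIccS, hHe, sdiff_singleton_eq_erase]
    have hmk' : m = k+1 := by exact_mod_cast hmk
    rw [hSerase, hCdef, hhval, hmk']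

/-- (Došlić) Write `n ≥ 2` as `n = T_k + j` with `T_k = k(k+1)/2` and `-1 ≤ j ≤ k-2`.
Among partitions of `n` into distinct parts, the maximum product of parts is
`(k+1)!/(k-j)`, achieved by the partition consisting of one copy each of `2, …, k+1`
with the part `k-j` omitted. -/
theorem max_norm_distinct_partition (n k : ℕ) (j : ℤ) (hn : 2 ≤ n)
    (hj1 : -1 ≤ j) (hj2 : j ≤ (k : ℤ) - 2)
    (hnk : (n : ℤ) = k * (k + 1) / 2 + j) :
    ∃ M : ℕ, (M : ℤ) * ((k : ℤ) - j) = (Nat.factorial (k + 1) : ℤ) ∧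
      IsGreatest {m | ∃ lam : Nat.Partition n, lam.parts.Nodup ∧ lam.parts.prod = m} M ∧
      ∃ lam : Nat.Partition n,
        lam.parts = (Multiset.Icc 2 (k + 1)).erase ((k : ℤ) - j).toNat ∧
        lam.parts.prod = M := by
  classical
  have h2n : 2*(n:ℤ) = k*(k+1) + 2*j := by
    obtain ⟨c, hc⟩ := Int.even_mul_succ_self (k:ℤ)
    have hdiv : ((k:ℤ)*(k+1))/2 = c := by rw [hc]; omega
    rw [hdiv] at hnk
    rw [hc]
    linarith
  have hk2 : 2 ≤ k := by
    by_contra hc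
    push_neg at hc
    interval_cases k <;> (norm_num at h2n; omega)
  set hh : ℕ := ((k:ℤ)-j).toNat with hhdef
  have hhZ : (hh:ℤ) = (k:ℤ) - j := Int.toNat_of_nonneg (by omega)
  have hh2 : 2 ≤ hh := by omega
  have hhk : hh ≤ k+1 := by omega
  set C : Finset ℕ := (Icc 2 (k+1)).erase hh with hCdef
  have hmemIcc : hh ∈ Icc 2 (k+1) := by simp only [mem_Icc]; omega
  have hsumIcck : 2 * ((Icc 2 (k+1)).sum id) + 2 = (k+1) * (k+2) := by
    have := sum_Icc_two (k+1) (by omega)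
    nlinarith [this]
  have hCsum' : hh + C.sum id = (Icc 2 (k+1)).sum id := by
    have := Finset.add_sum_erase (Icc 2 (k+1)) id hmemIcc
    simpa using this
  have hCsum : C.sum id = n := by
    set SI : ℕ := (Icc 2 (k+1)).sum id with hSIdef
    set SC : ℕ := C.sum id with hSCdef
    have h1 : 2 * ((SI:ℕ):ℤ) + 2 = ((k:ℤ)+1) * ((k:ℤ)+2) := by
      exact_mod_cast hsumIcck
    have h2 : (hh:ℤ) + ((SC:ℕ):ℤ) = ((SI:ℕ):ℤ) := by exact_mod_cast hCsum'
    have hq : ((k:ℤ)+1)*((k:ℤ)+2) = (k:ℤ)*((k:ℤ)+1) + 2*((k:ℤ)+1) := by ring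
    have : ((SC:ℕ) : ℤ) = (n:ℤ) := by linarith
    exact_mod_cast this
  have hCval_sum : C.val.sum = n := by
    have h1 : C.sum id = C.val.sum := by rw [Finset.sum_eq_multiset_sum, Multiset.map_id]
    rw [← h1, hCsum]
  have hCpos : ∀ {i : ℕ}, i ∈ C.val → 0 < i := by
    intro i hi
    have h1 : i ∈ C := hi
    have h2 := mem_of_mem_erase (hCdef ▸ h1)
    have := (mem_Icc.1 h2).1
    omega
  set lam : Nat.Partition n := ⟨C.val, hCpos, hCval_sum⟩ with hlamdef
  have hlam_prod : lam.parts.prod = C.prod id := by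
    have h1 : C.prod id = C.val.prod := by rw [Finset.prod_eq_multiset_prod, Multiset.map_id]
    rw [h1]
  refine ⟨C.prod id, ?_, ⟨⟨lam, C.nodup, hlam_prod⟩, ?_⟩, ⟨lam, ?_, hlam_prod⟩⟩
  · -- product formula
    have hprod : hh * C.prod id = Nat.factorial (k+1) := by
      have h1 : id hh * C.prod id = (Icc 2 (k+1)).prod id := Finset.mul_prod_erase _ id hmemIcc
      rw [prod_Icc_two] at h1
      simpa using h1
    rw [← hhZ]
    have hprod' : C.prod id * hh = Nat.factorial (k+1) := by rw [Nat.mul_comm]; exact hprod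
    exact_mod_cast hprod'
  · -- upper bound
    rintro x ⟨mu, hnd, hxprod⟩
    set S : Finset ℕ := mu.parts.toFinset with hSdef
    have hval : S.val = mu.parts := by
      rw [hSdef, Multiset.toFinset_val, Multiset.dedup_eq_self.mpr hnd]
    have h0 : 0 ∉ S := by
      intro h
      have h1 : (0:ℕ) ∈ mu.parts := by rw [← hval]; exact h
      exact lt_irrefl 0 (mu.parts_pos h1)
    have hsum : S.sum id = n := by
      rw [Finset.sum_eq_multiset_sum, Multiset.map_id, hval, mu.parts_sum]
    have hkey := key n k j hn hj1 hj2 h2n S h0 hsum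
    have hprodS : S.prod id = x := by
      rw [Finset.prod_eq_multiset_prod, Multiset.map_id, hval, hxprod]
    rw [hprodS] at hkey
    exact hkey
  · -- parts description
    show C.val = (Multiset.Icc 2 (k + 1)).erase hh
    rw [hCdef, Finset.erase_val]
    rfl
end

section
/- For a Rogers–Ramanujan partition of size n = k(k+1) (i.e., parts λ₁ > λ₂ > ... > λ_r with λ_i - λ_{i+1} ≥ 2 summing to n), the maximum norm is 2^k · k!, achieved by the partition (2k, 2k-2, ..., 4, 2). -/
/-- A Rogers–Ramanujan partition: distinct parts, any two distinct parts differ by at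
least 2 (equivalently, consecutive parts differ by at least 2). -/
def IsRogersRamanujan {n : ℕ} (lam : Nat.Partition n) : Prop :=
  lam.parts.Nodup ∧ ∀ a ∈ lam.parts, ∀ b ∈ lam.parts, a ≠ b → 2 ≤ |(a : ℤ) - (b : ℤ)|

set_option linter.unreachableTactic false
set_option linter.unusedTactic false
set_option linter.unnecessarySeqFocus false
set_option linter.unusedVariables false

open Finset


/-- An ascending Rogers–Ramanujan configuration given as a function on `range r`. -/
def RROk (r : ℕ) (a : ℕ → ℕ) : Prop :=
  (∀ i, i < r → 1 ≤ a i) ∧ ∀ i, i + 1 < r → a i + 2 ≤ a (i + 1)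

lemma RROk.mono {r : ℕ} {a : ℕ → ℕ} (h : RROk r a) :
    ∀ t i, i + t < r → a i + 2 * t ≤ a (i + t) := by
  intro t
  induction t with
  | zero => intro i _; simp
  | succ t ih =>
      intro i hi
      have h1 := ih i (by omega)
      have h2 := h.2 (i + t) (by omega)
      have he : i + (t + 1) = (i + t) + 1 := by omega
      rw [he]
      omega

lemma RR_prodLe {r : ℕ} {a : ℕ → ℕ} (hpos : ∀ i, i < r → 1 ≤ a i) :
    ∏ i ∈ range r, a i ≤ (∑ i ∈ range r, a i + 1) ^ (∑ i ∈ range r, a i) := by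
  set S := ∑ i ∈ range r, a i with hS
  have h1 : ∀ i ∈ range r, a i ≤ S + 1 := by
    intro i hi
    have := Finset.single_le_sum (f := a) (fun j _ => Nat.zero_le _) hi
    omega
  have h2 : ∏ i ∈ range r, a i ≤ ∏ i ∈ range r, (S + 1) :=
    Finset.prod_le_prod (fun _ _ => Nat.zero_le _) h1
  have h3 : ∏ i ∈ range r, (S + 1) = (S + 1) ^ r := by
    rw [Finset.prod_const, Finset.card_range]
  have h4 : r ≤ S := by
    have := Finset.sum_le_sum (f := fun _ => 1) (g := a)
      (fun i hi => hpos i (Finset.mem_range.mp hi))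
    simpa using this
  calc ∏ i ∈ range r, a i ≤ (S + 1) ^ r := by rw [← h3]; exact h2
    _ ≤ (S + 1) ^ S := Nat.pow_le_pow_right (by omega) h4

lemma RR_transfer {r p q : ℕ} {a : ℕ → ℕ} (hok : RROk r a) (hpq : p ≤ q) (hq1 : q + 1 < r)
    (hjp : a p + 3 ≤ a (p + 1)) (hjq : a q + 3 ≤ a (q + 1))
    (hsep : p < q ∨ a p + 4 ≤ a (p + 1)) :
    ∃ a', RROk r a' ∧ (∑ i ∈ range r, a' i = ∑ i ∈ range r, a i) ∧
      (∏ i ∈ range r, a i) < ∏ i ∈ range r, a' i := by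
  classical
  set a' : ℕ → ℕ := Function.update (Function.update a p (a p + 1)) (q + 1) (a (q + 1) - 1)
    with ha'
  have hne : p ≠ q + 1 := by omega
  have hval : ∀ i, a' i = if i = q + 1 then a (q + 1) - 1 else if i = p then a p + 1 else a i := by
    intro i
    simp only [ha', Function.update_apply]
  have hq1' : q < r := by omega
  have hposq : 1 ≤ a q := hok.1 q hq1'
  have hgap : a p + 2 ≤ a (q + 1) := by
    have := hok.mono (q + 1 - p) p (by omega)
    have he : p + (q + 1 - p) = q + 1 := by omega
    rw [he] at this
    omega
  refine ⟨a', ⟨?_, ?_⟩, ?_, ?_⟩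
  · intro i hi
    rw [hval]
    split_ifs <;> [omega; omega; exact hok.1 i hi]
  · intro i hi
    have g0 := hok.2 i hi
    by_cases h1 : i = q + 1
    · subst h1
      rw [hval, hval]
      split_ifs <;> omega
    · by_cases h2 : i + 1 = q + 1
      · have hiq : i = q := by omega
        subst hiq
        by_cases hqp : p = i
        · subst hqp
          have hbig : a p + 4 ≤ a (p + 1) := by
            rcases hsep with hlt | hbig
            · omega
            · exact hbig
          rw [hval, hval]
          split_ifs <;> omega
        · rw [hval, hval]
          split_ifs <;> omega
      · by_cases h3 : i + 1 = p
        · subst h3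
          rw [hval, hval]
          split_ifs <;> omega
        · by_cases h4 : i = p
          · subst h4
            rw [hval, hval]
            split_ifs <;> omega
          · rw [hval, hval]
            split_ifs <;> omega
  · have e1 : ∑ i ∈ range r, a' i
        = a' (q + 1) + ∑ i ∈ (range r).erase (q + 1), a' i :=
      (Finset.add_sum_erase _ a' (Finset.mem_range.mpr hq1)).symm
    have e2 : ∑ i ∈ (range r).erase (q + 1), a' i
        = a' p + ∑ i ∈ ((range r).erase (q + 1)).erase p, a' i :=
      (Finset.add_sum_erase _ a' (Finset.mem_erase.mpr ⟨hne, Finset.mem_range.mpr (by omega)⟩)).symm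
    have e3 : ∑ i ∈ range r, a i
        = a (q + 1) + ∑ i ∈ (range r).erase (q + 1), a i :=
      (Finset.add_sum_erase _ a (Finset.mem_range.mpr hq1)).symm
    have e4 : ∑ i ∈ (range r).erase (q + 1), a i
        = a p + ∑ i ∈ ((range r).erase (q + 1)).erase p, a i :=
      (Finset.add_sum_erase _ a (Finset.mem_erase.mpr ⟨hne, Finset.mem_range.mpr (by omega)⟩)).symm
    have e5 : ∑ i ∈ ((range r).erase (q + 1)).erase p, a' i
        = ∑ i ∈ ((range r).erase (q + 1)).erase p, a i := by
      apply Finset.sum_congr rfl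
      intro i hi
      simp only [Finset.mem_erase] at hi
      rw [hval]
      split_ifs <;> first | omega | rfl
    have v1 : a' (q + 1) = a (q + 1) - 1 := by rw [hval]; simp
    have v2 : a' p = a p + 1 := by rw [hval]; split_ifs <;> omega
    rw [e1, e2, e5, e3, e4, v1, v2]
    omega
  · have e1 : ∏ i ∈ range r, a' i
        = a' (q + 1) * ∏ i ∈ (range r).erase (q + 1), a' i :=
      (Finset.mul_prod_erase _ a' (Finset.mem_range.mpr hq1)).symm
    have e2 : ∏ i ∈ (range r).erase (q + 1), a' i
        = a' p * ∏ i ∈ ((range r).erase (q + 1)).erase p, a' i :=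
      (Finset.mul_prod_erase _ a' (Finset.mem_erase.mpr ⟨hne, Finset.mem_range.mpr (by omega)⟩)).symm
    have e3 : ∏ i ∈ range r, a i
        = a (q + 1) * ∏ i ∈ (range r).erase (q + 1), a i :=
      (Finset.mul_prod_erase _ a (Finset.mem_range.mpr hq1)).symm
    have e4 : ∏ i ∈ (range r).erase (q + 1), a i
        = a p * ∏ i ∈ ((range r).erase (q + 1)).erase p, a i :=
      (Finset.mul_prod_erase _ a (Finset.mem_erase.mpr ⟨hne, Finset.mem_range.mpr (by omega)⟩)).symm
    have e5 : ∏ i ∈ ((range r).erase (q + 1)).erase p, a' i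
        = ∏ i ∈ ((range r).erase (q + 1)).erase p, a i := by
      apply Finset.prod_congr rfl
      intro i hi
      simp only [Finset.mem_erase] at hi
      rw [hval]
      split_ifs <;> first | omega | rfl
    have v1 : a' (q + 1) = a (q + 1) - 1 := by rw [hval]; simp
    have v2 : a' p = a p + 1 := by rw [hval]; split_ifs <;> omega
    rw [e1, e2, e5, e3, e4, v1, v2]
    set R := ∏ i ∈ ((range r).erase (q + 1)).erase p, a i with hR
    have hRpos : 1 ≤ R := by
      apply Finset.one_le_prod'
      intro i hi
      simp only [Finset.mem_erase, Finset.mem_range] at hi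
      exact hok.1 i hi.2.2
    have key : a (q + 1) * a p + 1 ≤ (a (q + 1) - 1) * (a p + 1) := by
      rcases Nat.exists_eq_add_of_le hgap with ⟨t, ht⟩
      rw [ht]
      have hsub : a p + 2 + t - 1 = a p + 1 + t := by omega
      rw [hsub]
      nlinarith
    calc a (q + 1) * (a p * R) = (a (q + 1) * a p) * R := by ring
      _ < (a (q + 1) * a p + 1) * R := by nlinarith
      _ ≤ ((a (q + 1) - 1) * (a p + 1)) * R := Nat.mul_le_mul_right _ key
      _ = (a (q + 1) - 1) * ((a p + 1) * R) := by ring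

lemma RR_prepend2 {m : ℕ} {a : ℕ → ℕ} (hok : RROk (m + 1) a) (h6 : 6 ≤ a 0) :
    ∃ a', RROk (m + 2) a' ∧ (∑ i ∈ range (m + 2), a' i = ∑ i ∈ range (m + 1), a i) ∧
      (∏ i ∈ range (m + 1), a i) < ∏ i ∈ range (m + 2), a' i := by
  classical
  set a' : ℕ → ℕ := fun i => if i = 0 then 2 else if i = 1 then a 0 - 2 else a (i - 1) with ha'
  have hv0 : a' 0 = 2 := rfl
  have hv1 : a' 1 = a 0 - 2 := rfl
  have hv2 : ∀ i, a' (i + 2) = a (i + 1) := by intro i; simp [ha']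
  refine ⟨a', ⟨?_, ?_⟩, ?_, ?_⟩
  · intro i hi
    match i with
    | 0 => omega
    | 1 => rw [hv1]; omega
    | (j + 2) => rw [hv2]; exact hok.1 (j + 1) (by omega)
  · intro i hi
    match i with
    | 0 => rw [hv0, hv1]; omega
    | 1 =>
        rw [hv1, show (2 : ℕ) = 0 + 2 from rfl, hv2]
        have := hok.2 0 (by omega)
        omega
    | (j + 2) =>
        rw [hv2, show j + 2 + 1 = (j + 1) + 2 from rfl, hv2]
        exact hok.2 (j + 1) (by omega)
  · have eL : ∑ i ∈ range (m + 1), a i = (∑ i ∈ range m, a (i + 1)) + a 0 :=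
      Finset.sum_range_succ' a m
    have eR : ∑ i ∈ range (m + 2), a' i
        = ((∑ i ∈ range m, a' (i + 1 + 1)) + a' (0 + 1)) + a' 0 := by
      rw [Finset.sum_range_succ', Finset.sum_range_succ']
    have e : ∀ i, a' (i + 1 + 1) = a (i + 1) := fun i => hv2 i
    simp only [e, hv0] at eR
    have hv1' : a' (0 + 1) = a 0 - 2 := hv1
    rw [hv1'] at eR
    rw [eL, eR]
    omega
  · have eL : ∏ i ∈ range (m + 1), a i = (∏ i ∈ range m, a (i + 1)) * a 0 :=
      Finset.prod_range_succ' a m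
    have eR : ∏ i ∈ range (m + 2), a' i
        = ((∏ i ∈ range m, a' (i + 1 + 1)) * a' (0 + 1)) * a' 0 := by
      rw [Finset.prod_range_succ', Finset.prod_range_succ']
    have e : ∀ i, a' (i + 1 + 1) = a (i + 1) := fun i => hv2 i
    simp only [e, hv0] at eR
    have hv1' : a' (0 + 1) = a 0 - 2 := hv1
    rw [hv1'] at eR
    rw [eL, eR]
    set Q := ∏ i ∈ range m, a (i + 1) with hQ
    have hQpos : 1 ≤ Q := by
      apply Finset.one_le_prod'
      intro i hi
      exact hok.1 (i + 1) (by simp at hi; omega)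
    have : a 0 + 1 ≤ (a 0 - 2) * 2 := by omega
    calc Q * a 0 ≤ Q * a 0 := le_rfl
      _ < Q * ((a 0 - 2) * 2) := by
          apply Nat.mul_lt_mul_of_le_of_lt le_rfl (by omega) (by omega)
      _ = Q * (a 0 - 2) * 2 := by ring


lemma RR_closed_nojump {r : ℕ} {a : ℕ → ℕ} (h2 : ∀ i, i + 1 < r → a (i + 1) = a i + 2) :
    ∀ j, j < r → a j = a 0 + 2 * j := by
  intro j
  induction j with
  | zero => intro _; simp
  | succ j ih =>
      intro hj
      rw [h2 j hj]
      have := ih (by omega)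
      omega

lemma RR_closed_onejump {r p : ℕ} {a : ℕ → ℕ} (h3 : a (p + 1) = a p + 3)
    (h2 : ∀ i, i + 1 < r → i ≠ p → a (i + 1) = a i + 2) :
    ∀ j, j < r → a j = a 0 + 2 * j + (if p < j then 1 else 0) := by
  intro j
  induction j with
  | zero => intro _; simp
  | succ j ih =>
      intro hj
      have hih := ih (by omega)
      by_cases hjp : j = p
      · subst hjp
        rw [h3]
        split_ifs at hih ⊢ <;> omega
      · rw [h2 j hj hjp]
        split_ifs at hih ⊢ <;> omega

lemma RR_sum_closed (r c : ℕ) : ∑ j ∈ range r, (c + 2 * j) = r * c + r * (r - 1) := by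
  have h1 : ∑ j ∈ range r, (c + 2 * j) = r * c + 2 * ∑ j ∈ range r, j := by
    rw [Finset.sum_add_distrib, Finset.sum_const, card_range, smul_eq_mul, Finset.mul_sum]
  have h2 := Finset.sum_range_id_mul_two r
  rw [h1]
  nlinarith [h2]

lemma RR_sum_ind (p : ℕ) : ∀ r, ∑ j ∈ range r, (if p < j then 1 else 0) = r - p - 1 := by
  intro r
  induction r with
  | zero => simp
  | succ r ih =>
      rw [Finset.sum_range_succ, ih]
      split_ifs <;> omega

lemma RR_prod_two : ∀ k, ∏ i ∈ range k, (2 * i + 2) = 2 ^ k * Nat.factorial k := by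
  intro k
  induction k with
  | zero => simp
  | succ k ih =>
      rw [Finset.prod_range_succ, ih, pow_succ, Nat.factorial_succ]
      ring

lemma RR_prod_four : ∀ m, ∏ i ∈ range m, (2 * i + 4) = 2 ^ m * Nat.factorial (m + 1) := by
  intro m
  induction m with
  | zero => simp
  | succ m ih =>
      rw [Finset.prod_range_succ, ih, pow_succ]
      rw [show m + 1 + 1 = (m + 1) + 1 from rfl, Nat.factorial_succ (m+1), Nat.factorial_succ m]
      ring


lemma dio_nj1 {m k : ℕ} (hk : 1 ≤ k) (h : (m+1)*1 + (m+1)*m = k*(k+1)) : False := by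
  have h1 : m + 1 ≤ k := by nlinarith
  have h2 : k ≤ m := by nlinarith
  omega

lemma dio_nj2 {m k : ℕ} (hk : 1 ≤ k) (h : (m+1)*2 + (m+1)*m = k*(k+1)) : k = m + 1 := by
  have h1 : m + 1 ≤ k := by nlinarith
  have h2 : k ≤ m + 1 := by nlinarith
  omega

lemma dio_nj3 {m k : ℕ} (hk : 1 ≤ k) (h : (m+1)*3 + (m+1)*m = k*(k+1)) : False := by
  have h1 : m + 2 ≤ k := by nlinarith
  have h2 : k ≤ m + 1 := by nlinarith
  omega

lemma dio_nj4 {m k : ℕ} (hk : 1 ≤ k) (h : (m+1)*4 + (m+1)*m = k*(k+1)) : False := by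
  have h1 : m + 2 ≤ k := by nlinarith
  have h2 : k ≤ m + 1 := by nlinarith
  omega

lemma dio_nj5 {m k : ℕ} (hk : 1 ≤ k) (h : (m+1)*5 + (m+1)*m = k*(k+1)) : m = 1 ∧ k = 3 := by
  have h1 : m + 2 ≤ k := by nlinarith
  have h2 : k ≤ m + 2 := by nlinarith
  have hk2 : k = m + 2 := by omega
  subst hk2
  constructor
  · nlinarith
  · nlinarith

lemma dio_oj1 {m k e : ℕ} (hk : 1 ≤ k) (he1 : 1 ≤ e) (he2 : e ≤ m)
    (h : (m+1)*1 + (m+1)*m + e = k*(k+1)) : False := by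
  have h1 : m + 1 ≤ k := by nlinarith
  have h2 : k ≤ m := by nlinarith
  omega

lemma dio_oj2 {m k e : ℕ} (hk : 1 ≤ k) (he1 : 1 ≤ e) (he2 : e ≤ m)
    (h : (m+1)*2 + (m+1)*m + e = k*(k+1)) : False := by
  have h1 : m + 2 ≤ k := by nlinarith
  have h2 : k ≤ m + 1 := by nlinarith
  omega

lemma dio_oj3 {m k e : ℕ} (hk : 1 ≤ k) (he1 : 1 ≤ e) (he2 : e ≤ m)
    (h : (m+1)*3 + (m+1)*m + e = k*(k+1)) : False := by
  have h1 : m + 2 ≤ k := by nlinarith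
  have h2 : k ≤ m + 1 := by nlinarith
  omega

lemma dio_oj4 {m k e : ℕ} (hk : 1 ≤ k) (he1 : 1 ≤ e) (he2 : e ≤ m)
    (h : (m+1)*4 + (m+1)*m + e = k*(k+1)) : k = m + 2 ∧ e = 2 := by
  have h1 : m + 2 ≤ k := by nlinarith
  have h2 : k ≤ m + 2 := by nlinarith
  have hk2 : k = m + 2 := by omega
  subst hk2
  refine ⟨rfl, by nlinarith⟩

lemma dio_oj5 {m k e : ℕ} (hk : 1 ≤ k) (he1 : 1 ≤ e) (he2 : e ≤ m)
    (h : (m+1)*5 + (m+1)*m + e = k*(k+1)) : False := by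
  have h1 : m + 2 ≤ k := by nlinarith
  have h2 : k ≤ m + 2 := by nlinarith
  have hk2 : k = m + 2 := by omega
  subst hk2
  nlinarith

lemma fam_bound (s : ℕ) :
    (2 ^ (s+1) * Nat.factorial (s+2)) * ((2*s+7) * (2*s+9)) ≤ 2 ^ (s+4) * Nat.factorial (s+4) := by
  have h : Nat.factorial (s+4) = (s+4) * ((s+3) * Nat.factorial (s+2)) := by
    rw [show s+4 = (s+3)+1 from rfl, Nat.factorial_succ, show s+3 = (s+2)+1 from rfl,
      Nat.factorial_succ]
  rw [h]
  have key : (2*s+7) * (2*s+9) ≤ 8 * ((s+4) * (s+3)) := by nlinarith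
  calc (2 ^ (s+1) * Nat.factorial (s+2)) * ((2*s+7) * (2*s+9))
      ≤ (2 ^ (s+1) * Nat.factorial (s+2)) * (8 * ((s+4) * (s+3))) :=
        Nat.mul_le_mul_left _ key
    _ = 2 ^ (s+4) * ((s+4) * ((s+3) * Nat.factorial (s+2))) := by ring

lemma RR_step {k r : ℕ} {a : ℕ → ℕ} (hk : 1 ≤ k) (hok : RROk r a)
    (hsum : ∑ i ∈ range r, a i = k * (k + 1)) :
    (∏ i ∈ range r, a i ≤ 2 ^ k * Nat.factorial k) ∨
    ∃ r' a', RROk r' a' ∧ (∑ i ∈ range r', a' i = k * (k + 1)) ∧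
      (∏ i ∈ range r, a i) < ∏ i ∈ range r', a' i := by
  have hkk : 1 ≤ k * (k + 1) := Nat.one_le_iff_ne_zero.mpr (by positivity)
  rcases Nat.eq_zero_or_pos r with rfl | hr
  · simp at hsum
    linarith [hkk, hsum]
  obtain ⟨m, rfl⟩ : ∃ m, r = m + 1 := ⟨r - 1, by omega⟩
  by_cases h6 : 6 ≤ a 0
  · obtain ⟨a', h1, h2, h3⟩ := RR_prepend2 hok h6
    exact Or.inr ⟨m + 2, a', h1, by rw [h2, hsum], h3⟩
  have ha0 : 1 ≤ a 0 := hok.1 0 (by omega)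
  by_cases hJ2 : ∃ p q, p + 1 < m + 1 ∧ q + 1 < m + 1 ∧ a p + 3 ≤ a (p + 1) ∧
      a q + 3 ≤ a (q + 1) ∧ p < q
  · obtain ⟨p, q, hp1, hq1, hp3, hq3, hpq⟩ := hJ2
    obtain ⟨a', h1, h2, h3⟩ := RR_transfer hok (le_of_lt hpq) hq1 hp3 hq3 (Or.inl hpq)
    exact Or.inr ⟨m + 1, a', h1, by rw [h2, hsum], h3⟩
  by_cases hJ4 : ∃ p, p + 1 < m + 1 ∧ a p + 4 ≤ a (p + 1)
  · obtain ⟨p, hp1, hp4⟩ := hJ4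
    obtain ⟨a', h1, h2, h3⟩ := RR_transfer hok le_rfl hp1 (by omega) (by omega) (Or.inr hp4)
    exact Or.inr ⟨m + 1, a', h1, by rw [h2, hsum], h3⟩
  push_neg at hJ2 hJ4
  by_cases hJ : ∃ p, p + 1 < m + 1 ∧ a p + 3 ≤ a (p + 1)
  · -- unique jump with gap exactly 3
    left
    obtain ⟨p, hpr, hp3⟩ := hJ
    have hexact : a (p + 1) = a p + 3 := by
      have := hJ4 p hpr
      omega
    have h2g : ∀ i, i + 1 < m + 1 → i ≠ p → a (i + 1) = a i + 2 := by
      intro i hi hne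
      have hb := hok.2 i hi
      by_contra hcon
      have h3i : a i + 3 ≤ a (i + 1) := by omega
      rcases Nat.lt_or_ge i p with hlt | hge
      · have := hJ2 i p hi hpr h3i hp3
        omega
      · have := hJ2 p i hpr hi hp3 h3i
        omega
    have key := RR_closed_onejump hexact h2g
    have hsum2 : ∑ j ∈ range (m+1), a j
        = ∑ j ∈ range (m+1), (a 0 + 2*j + (if p < j then 1 else 0)) :=
      Finset.sum_congr rfl (fun j hj => key j (Finset.mem_range.mp hj))
    have hsum3 : ∑ j ∈ range (m+1), (a 0 + 2*j + (if p < j then 1 else 0))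
        = ((m+1) * a 0 + (m+1)*m) + (m - p) := by
      rw [Finset.sum_add_distrib, RR_sum_closed (m+1) (a 0), RR_sum_ind p (m+1)]
      congr 1
      omega
    rw [hsum2, hsum3] at hsum
    have he1 : 1 ≤ m - p := by omega
    have he2 : m - p ≤ m := by omega
    have hc : a 0 = 1 ∨ a 0 = 2 ∨ a 0 = 3 ∨ a 0 = 4 ∨ a 0 = 5 := by omega
    rcases hc with h | h | h | h | h
    · rw [h] at hsum
      exact (dio_oj1 hk he1 he2 (by linarith [hsum])).elim
    · rw [h] at hsum
      exact (dio_oj2 hk he1 he2 (by linarith [hsum])).elim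
    · rw [h] at hsum
      exact (dio_oj3 hk he1 he2 (by linarith [hsum])).elim
    · rw [h] at hsum
      obtain ⟨hk2, he⟩ := dio_oj4 hk he1 he2 (by linarith [hsum])
      obtain ⟨s, rfl⟩ : ∃ s, m = s + 2 := ⟨m - 2, by omega⟩
      have hps : s = p := by omega
      subst hps
      have e1 : ∏ j ∈ range (s+1), a j = ∏ j ∈ range (s+1), (2*j+4) := by
        apply Finset.prod_congr rfl
        intro j hj
        have hj' : j < s + 1 := Finset.mem_range.mp hj
        have hkey := key j (by omega)
        rw [h] at hkey
        split_ifs at hkey <;> omega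
      have e2 : a (s+1) = 2*s+7 := by
        have hkey := key (s+1) (by omega)
        rw [h] at hkey
        split_ifs at hkey <;> omega
      have e3 : a (s+2) = 2*s+9 := by
        have hkey := key (s+2) (by omega)
        rw [h] at hkey
        split_ifs at hkey <;> omega
      have hsplit : (∏ j ∈ range (s+2+1), a j)
          = ((∏ j ∈ range (s+1), a j) * a (s+1)) * a (s+2) := by
        rw [show s+2+1 = (s+2)+1 from rfl, Finset.prod_range_succ,
          show s+2 = (s+1)+1 from rfl, Finset.prod_range_succ]
      rw [hsplit, e1, e2, e3, RR_prod_four, hk2]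
      have hrw : s + 2 + 2 = s + 4 := by omega
      rw [hrw]
      calc 2 ^ (s+1) * Nat.factorial (s+1+1) * (2*s+7) * (2*s+9)
          = (2 ^ (s+1) * Nat.factorial (s+2)) * ((2*s+7) * (2*s+9)) := by ring_nf
        _ ≤ 2 ^ (s+4) * Nat.factorial (s+4) := fam_bound s
    · rw [h] at hsum
      exact (dio_oj5 hk he1 he2 (by linarith [hsum])).elim
  · -- no jumps
    left
    push_neg at hJ
    have h2g : ∀ i, i + 1 < m + 1 → a (i + 1) = a i + 2 := by
      intro i hi
      have h1 := hok.2 i hi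
      have h2 := hJ i hi
      omega
    have key := RR_closed_nojump h2g
    have hsum2 : ∑ j ∈ range (m+1), a j = (m+1) * a 0 + (m+1)*m := by
      rw [Finset.sum_congr rfl (fun j hj => key j (Finset.mem_range.mp hj)),
        RR_sum_closed]
      congr 1
    rw [hsum2] at hsum
    have hc : a 0 = 1 ∨ a 0 = 2 ∨ a 0 = 3 ∨ a 0 = 4 ∨ a 0 = 5 := by omega
    rcases hc with h | h | h | h | h
    · rw [h] at hsum
      exact (dio_nj1 (m := m) hk (by linarith [hsum])).elim
    · rw [h] at hsum
      have hk2 : k = m + 1 := dio_nj2 hk (by linarith [hsum])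
      have hprod : ∏ j ∈ range (m+1), a j = ∏ j ∈ range (m+1), (2*j+2) := by
        apply Finset.prod_congr rfl
        intro j hj
        have := key j (Finset.mem_range.mp hj)
        omega
      rw [hprod, RR_prod_two, hk2]
    · rw [h] at hsum
      exact (dio_nj3 (m := m) hk (by linarith [hsum])).elim
    · rw [h] at hsum
      exact (dio_nj4 (m := m) hk (by linarith [hsum])).elim
    · rw [h] at hsum
      obtain ⟨hm, hk3⟩ := dio_nj5 (m := m) hk (by linarith [hsum])
      subst hm hk3
      have e0 : a 0 = 5 := h
      have e1 : a 1 = 7 := by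
        have := key 1 (by omega)
        omega
      rw [show (1:ℕ)+1 = 0+1+1 from rfl, Finset.prod_range_succ, Finset.prod_range_succ,
        Finset.prod_range_zero]
      rw [e0, e1]
      norm_num [Nat.factorial]

lemma RR_bound_aux (k : ℕ) : ∀ N r (a : ℕ → ℕ), RROk r a →
    (∑ i ∈ range r, a i = k * (k + 1)) →
    (k * (k + 1) + 1) ^ (k * (k + 1)) < (∏ i ∈ range r, a i) + N →
    ∏ i ∈ range r, a i ≤ 2 ^ k * Nat.factorial k := by
  intro N
  induction N with
  | zero =>
      intro r a hok hsum hlt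
      have := RR_prodLe hok.1
      rw [hsum] at this
      omega
  | succ N ih =>
      intro r a hok hsum hlt
      rcases Nat.eq_zero_or_pos k with rfl | hk
      · -- k = 0 : sum is 0, so r = 0 and product is 1
        have hr : r = 0 := by
          by_contra hr0
          have h0 : 1 ≤ a 0 := hok.1 0 (by omega)
          have : a 0 ≤ ∑ i ∈ range r, a i :=
            Finset.single_le_sum (f := a) (fun j _ => Nat.zero_le _)
              (Finset.mem_range.mpr (by omega))
          have hs0 : ∑ i ∈ range r, a i = 0 := by simpa using hsum
          omega
        subst hr
        simp
      rcases RR_step hk hok hsum with h | ⟨r', a', hok', hsum', hlt'⟩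
      · exact h
      · have := ih r' a' hok' hsum' (by omega)
        omega

lemma RR_bound {k r : ℕ} {a : ℕ → ℕ} (hok : RROk r a)
    (hsum : ∑ i ∈ range r, a i = k * (k + 1)) :
    ∏ i ∈ range r, a i ≤ 2 ^ k * Nat.factorial k :=
  RR_bound_aux k ((k * (k + 1) + 1) ^ (k * (k + 1)) + 1) r a hok hsum (by omega)

lemma list_sum_getD (l : List ℕ) : ∑ i ∈ range l.length, l.getD i 0 = l.sum := by
  induction l with
  | nil => simp
  | cons x t ih =>
      rw [List.length_cons, Finset.sum_range_succ']
      simp only [List.getD_cons_succ, List.getD_cons_zero, List.sum_cons, ih]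
      omega

lemma list_prod_getD (l : List ℕ) : ∏ i ∈ range l.length, l.getD i 0 = l.prod := by
  induction l with
  | nil => simp
  | cons x t ih =>
      rw [List.length_cons, Finset.prod_range_succ']
      simp only [List.getD_cons_succ, List.getD_cons_zero, List.prod_cons, ih]
      ring

lemma RR_upper {k n : ℕ} (hn : n = k * (k + 1)) (lam : Nat.Partition n)
    (h : IsRogersRamanujan lam) : lam.parts.prod ≤ 2 ^ k * Nat.factorial k := by
  set l : List ℕ := Multiset.sort lam.parts (· ≤ ·) with hldef
  have hl : (↑l : Multiset ℕ) = lam.parts := Multiset.sort_eq _ _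
  have hsorted : l.Pairwise (· ≤ ·) := Multiset.pairwise_sort _ _
  have hnodup : l.Nodup := by
    rw [← Multiset.coe_nodup, hl]
    exact h.1
  have hmem : ∀ x ∈ l, x ∈ lam.parts := by
    intro x hx
    rw [← hl]
    exact hx
  have hok : RROk l.length (fun i => l.getD i 0) := by
    constructor
    · intro i hi
      show 1 ≤ l.getD i 0
      have : l.getD i 0 ∈ l := by
        rw [List.getD_eq_getElem l 0 hi]
        exact List.getElem_mem _
      exact lam.parts_pos (hmem _ this)
    · intro i hi
      have hi1 : i < l.length := by omega
      show l.getD i 0 + 2 ≤ l.getD (i + 1) 0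
      rw [List.getD_eq_getElem l 0 hi1, List.getD_eq_getElem l 0 hi]
      have hle : l[i] ≤ l[i + 1] := by
        have := hsorted.rel_get_of_lt (a := ⟨i, hi1⟩) (b := ⟨i + 1, hi⟩)
          (by simp [Fin.lt_def])
        simpa [List.get_eq_getElem] using this
      have hne : l[i] ≠ l[i + 1] := by
        intro hcon
        have := (hnodup.get_inj_iff (i := ⟨i, hi1⟩) (j := ⟨i + 1, hi⟩)).mp
          (by simpa [List.get_eq_getElem] using hcon)
        simp [Fin.ext_iff] at this
      have habs := h.2 l[i] (hmem _ (List.getElem_mem _)) l[i + 1]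
        (hmem _ (List.getElem_mem _)) hne
      have hle' : (l[i] : ℤ) ≤ (l[i + 1] : ℤ) := by exact_mod_cast hle
      rw [abs_of_nonpos (by linarith)] at habs
      have : (l[i] : ℤ) + 2 ≤ (l[i + 1] : ℤ) := by linarith
      exact_mod_cast this
  have hsum : ∑ i ∈ range l.length, l.getD i 0 = k * (k + 1) := by
    rw [list_sum_getD, ← Multiset.sum_coe, hl, lam.parts_sum, hn]
  have := RR_bound hok hsum
  rw [list_prod_getD, ← Multiset.prod_coe, hl] at this
  exact this


lemma target_sum : ∀ k, ((Multiset.range k).map (fun i => 2 * (i + 1))).sum = k * (k + 1) := by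
  intro k
  induction k with
  | zero => simp
  | succ k ih =>
      rw [Multiset.range_succ, Multiset.map_cons, Multiset.sum_cons, ih]
      ring

lemma target_prod : ∀ k, ((Multiset.range k).map (fun i => 2 * (i + 1))).prod
    = 2 ^ k * Nat.factorial k := by
  intro k
  induction k with
  | zero => simp
  | succ k ih =>
      rw [Multiset.range_succ, Multiset.map_cons, Multiset.prod_cons, ih, pow_succ,
        Nat.factorial_succ]
      ring

def targetPartition (k n : ℕ) (hn : n = k * (k + 1)) : Nat.Partition n where
  parts := (Multiset.range k).map (fun i => 2 * (i + 1))
  parts_pos := by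
    intro i hi
    obtain ⟨j, _, rfl⟩ := Multiset.mem_map.mp hi
    show 0 < 2 * (j + 1)
    omega
  parts_sum := by rw [target_sum, hn]

lemma target_RR (k n : ℕ) (hn : n = k * (k + 1)) :
    IsRogersRamanujan (targetPartition k n hn) := by
  have hparts : (targetPartition k n hn).parts = (Multiset.range k).map (fun i => 2 * (i + 1)) :=
    rfl
  rw [IsRogersRamanujan, hparts]
  constructor
  · apply Multiset.Nodup.map
    · intro i j hij
      have h2 : 2 * (i + 1) = 2 * (j + 1) := hij
      omega
    · exact Multiset.nodup_range k
  · intro a ha b hb hab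
    obtain ⟨i, _, rfl⟩ := Multiset.mem_map.mp ha
    obtain ⟨j, _, rfl⟩ := Multiset.mem_map.mp hb
    have hij : i ≠ j := by intro hcon; exact hab (by rw [hcon])
    have : ((2 * (i + 1) : ℕ) : ℤ) - ((2 * (j + 1) : ℕ) : ℤ) = 2 * ((i : ℤ) - (j : ℤ)) := by
      push_cast
      ring
    rw [this, abs_mul]
    have h1 : (1 : ℤ) ≤ |(i : ℤ) - (j : ℤ)| :=
      Int.one_le_abs (sub_ne_zero_of_ne (by exact_mod_cast hij))
    calc (2 : ℤ) = 2 * 1 := by ring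
      _ ≤ |2| * |(i : ℤ) - (j : ℤ)| := by
          rw [show |(2:ℤ)| = 2 from rfl]
          exact mul_le_mul_of_nonneg_left h1 (by norm_num)

/-- For `n = k(k+1)`, among Rogers–Ramanujan partitions of `n` the maximum norm is
`2^k · k!`, achieved by `(2k, 2k-2, …, 4, 2)`. -/
theorem max_norm_RR_partition (k n : ℕ) (hn : n = k * (k + 1)) :
    IsGreatest {m | ∃ lam : Nat.Partition n, IsRogersRamanujan lam ∧ lam.parts.prod = m}
      (2 ^ k * Nat.factorial k) ∧
    ∃ lam : Nat.Partition n,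
      lam.parts = (Multiset.range k).map (fun i => 2 * (i + 1)) ∧
      lam.parts.prod = 2 ^ k * Nat.factorial k := by
  refine ⟨⟨⟨targetPartition k n hn, target_RR k n hn, target_prod k⟩, ?_⟩,
    ⟨targetPartition k n hn, rfl, target_prod k⟩⟩
  rintro m ⟨lam, hRR, rfl⟩
  exact RR_upper hn lam hRR
end

section
/- A partition with parts all ≥ 2 whose product of parts is ν achieves the minimum possible sum of parts (namely the sum α₁p₁+⋯+α_tp_t over the prime factorization of ν) if and only if it has the shape ⟨2^{α₁-2β} · 4^{β} · p₂^{α₂} · p₃^{α₃} ⋯⟩ for some integer β with 0 ≤ 2β ≤ α₁, where ν = 2^{α₁} p₂^{α₂} ⋯ p_t^{α_t}. -/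
private def fS (n : ℕ) : ℕ := n.factorization.sum fun p a => a * p

private lemma fS_mul {m n : ℕ} (hm : m ≠ 0) (hn : n ≠ 0) : fS (m * n) = fS m + fS n := by
  unfold fS
  rw [Nat.factorization_mul hm hn]
  exact Finsupp.sum_add_index' (fun p => by simp) (fun p b c => by ring)

private lemma fS_prime {p : ℕ} (hp : p.Prime) : fS p = p := by
  unfold fS
  rw [hp.factorization]
  simp

private lemma fS_four : fS 4 = 4 := by
  have : (4 : ℕ) = 2 * 2 := by norm_num
  rw [this, fS_mul (by norm_num) (by norm_num), fS_prime Nat.prime_two]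

private lemma fS_prod (M : Multiset ℕ) (h : ∀ a ∈ M, a ≠ 0) :
    fS M.prod = (M.map fS).sum := by
  induction M using Multiset.induction with
  | empty => simp [fS]
  | cons a s ih =>
    have hs : ∀ b ∈ s, b ≠ 0 := fun b hb => h b (Multiset.mem_cons_of_mem hb)
    have hps : s.prod ≠ 0 := Multiset.prod_ne_zero (fun h0 => hs 0 h0 rfl)
    simp only [Multiset.prod_cons, Multiset.map_cons, Multiset.sum_cons]
    rw [fS_mul (h a (Multiset.mem_cons_self a s)) hps, ih hs]

private lemma fS_key : ∀ a : ℕ, 2 ≤ a → fS a ≤ a ∧ (fS a = a ↔ a.Prime ∨ a = 4) := by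
  intro a
  induction a using Nat.strong_induction_on with
  | _ a ih =>
    intro ha
    by_cases hp : a.Prime
    · simp [fS_prime hp, hp]
    · have h1 : a ≠ 1 := by omega
      have hpp : a.minFac.Prime := Nat.minFac_prime h1
      obtain ⟨m, hm⟩ := Nat.minFac_dvd a
      set p := a.minFac with hpdef
      have hp2 : 2 ≤ p := hpp.two_le
      have hm0 : m ≠ 0 := by rintro rfl; omega
      have hm1 : m ≠ 1 := by
        rintro rfl
        rw [mul_one] at hm
        exact hp (hm ▸ hpp)
      have hm2 : 2 ≤ m := by omega
      have h2m : 2 * m ≤ p * m := Nat.mul_le_mul_right m hp2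
      have h2p : 2 * p ≤ m * p := Nat.mul_le_mul_right p hm2
      have hmlt : m < a := by omega
      have hfa : fS a = p + fS m := by
        rw [hm, fS_mul (by omega) hm0, fS_prime hpp]
      obtain ⟨ihle, ihiff⟩ := ih m hmlt hm2
      have hadd : p + m ≤ p * m := Nat.add_le_mul hp2 hm2
      constructor
      · omega
      constructor
      · intro heq
        have hfm : fS m = m := by omega
        have hpm : p + m = p * m := by omega
        have hple : p ≤ m := by nlinarith
        have hmle : m ≤ p := by nlinarith
        have : p = 2 := by nlinarith
        right
        omega
      · rintro (h | h)
        · exact absurd h hp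
        · rw [h, fS_four]

private lemma sum_map_le (M : Multiset ℕ) (g : ℕ → ℕ) (h : ∀ a ∈ M, g a ≤ a) :
    (M.map g).sum ≤ M.sum := by
  induction M using Multiset.induction with
  | empty => simp
  | cons a s ih =>
    have h1 := h a (Multiset.mem_cons_self a s)
    have h2 := ih (fun b hb => h b (Multiset.mem_cons_of_mem hb))
    simp only [Multiset.map_cons, Multiset.sum_cons, Multiset.sum_cons]
    omega

private lemma sum_map_eq_of (M : Multiset ℕ) (g : ℕ → ℕ) (h : ∀ a ∈ M, g a ≤ a)
    (heq : (M.map g).sum = M.sum) : ∀ a ∈ M, g a = a := by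
  induction M using Multiset.induction with
  | empty => simp
  | cons a s ih =>
    have h1 := h a (Multiset.mem_cons_self a s)
    have hs : ∀ b ∈ s, g b ≤ b := fun b hb => h b (Multiset.mem_cons_of_mem hb)
    have h2 := sum_map_le s g hs
    simp only [Multiset.map_cons, Multiset.sum_cons] at heq
    have hga : g a = a := by omega
    have hseq : (s.map g).sum = s.sum := by omega
    intro b hb
    rcases Multiset.mem_cons.1 hb with rfl | hb'
    · exact hga
    · exact ih hs hseq b hb'

private lemma fact_count (M : Multiset ℕ) (h : ∀ a ∈ M, a ≠ 0) (q : ℕ) :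
    M.prod.factorization q = (M.map (fun a => a.factorization q)).sum := by
  induction M using Multiset.induction with
  | empty => simp
  | cons a s ih =>
    have hs : ∀ b ∈ s, b ≠ 0 := fun b hb => h b (Multiset.mem_cons_of_mem hb)
    have hps : s.prod ≠ 0 := Multiset.prod_ne_zero (fun h0 => hs 0 h0 rfl)
    rw [Multiset.prod_cons, Nat.factorization_mul (h a (Multiset.mem_cons_self a s)) hps]
    simp only [Multiset.map_cons, Multiset.sum_cons, Finsupp.add_apply]
    rw [ih hs]

private lemma fact_four {q : ℕ} (hq : q ≠ 2) : (4 : ℕ).factorization q = 0 := by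
  have : (4 : ℕ) = 2 ^ 2 := by norm_num
  rw [this, Nat.Prime.factorization_pow Nat.prime_two, Finsupp.single_apply]
  simp [Ne.symm hq]

private lemma map_fact2 (M : Multiset ℕ) (h : ∀ a ∈ M, a.Prime ∨ a = 4) :
    (M.map (fun a => a.factorization 2)).sum = M.count 2 + 2 * M.count 4 := by
  induction M using Multiset.induction with
  | empty => simp
  | cons a s ih =>
    have ha := h a (Multiset.mem_cons_self a s)
    have hs : ∀ b ∈ s, b.Prime ∨ b = 4 := fun b hb => h b (Multiset.mem_cons_of_mem hb)
    have hfa : a.factorization 2 = (if a = 2 then 1 else 0) + (if a = 4 then 2 else 0) := by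
      rcases ha with hp | rfl
      · have h4 : a ≠ 4 := fun h4 => by rw [h4] at hp; norm_num at hp
        rw [hp.factorization, Finsupp.single_apply]
        rcases eq_or_ne a 2 with rfl | hne
        · simp
        · simp [hne, Ne.symm hne, h4]
      · rw [show (4 : ℕ) = 2 ^ 2 by norm_num, Nat.Prime.factorization_pow Nat.prime_two]
        norm_num [Finsupp.single_apply]
    simp only [Multiset.map_cons, Multiset.sum_cons, Multiset.count_cons, hfa, ih hs]
    split_ifs <;> omega

private lemma map_factq (M : Multiset ℕ) (h : ∀ a ∈ M, a.Prime ∨ a = 4) (q : ℕ)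
    (hqp : q.Prime) (hq2 : q ≠ 2) :
    (M.map (fun a => a.factorization q)).sum = M.count q := by
  induction M using Multiset.induction with
  | empty => simp
  | cons a s ih =>
    have ha := h a (Multiset.mem_cons_self a s)
    have hs : ∀ b ∈ s, b.Prime ∨ b = 4 := fun b hb => h b (Multiset.mem_cons_of_mem hb)
    have hq4 : q ≠ 4 := fun h4 => by rw [h4] at hqp; norm_num at hqp
    have hfa : a.factorization q = if a = q then 1 else 0 := by
      rcases ha with hp | rfl
      · rw [hp.factorization, Finsupp.single_apply]
      · rw [fact_four hq2]
        simp [Ne.symm hq4]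
    simp only [Multiset.map_cons, Multiset.sum_cons, Multiset.count_cons, hfa, ih hs]
    split_ifs <;> omega

private lemma count_L (ν q : ℕ) :
    Multiset.count q ((ν.primeFactorsList.filter (fun p => p ≠ 2) : List ℕ) : Multiset ℕ)
      = if q.Prime ∧ q ≠ 2 then ν.factorization q else 0 := by
  rw [Multiset.coe_count]
  by_cases hq2 : q = 2
  · subst hq2
    have : (2 : ℕ) ∉ ν.primeFactorsList.filter (fun p => p ≠ 2) := by
      intro hmem
      have := List.of_mem_filter hmem
      simp at this
    rw [List.count_eq_zero_of_not_mem this]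
    simp
  · rw [List.count_filter (by simp [hq2])]
    by_cases hqp : q.Prime
    · rw [Nat.primeFactorsList_count_eq]
      simp [hqp, hq2]
    · have : q ∉ ν.primeFactorsList := fun hmem => hqp (Nat.prime_of_mem_primeFactorsList hmem)
      rw [List.count_eq_zero_of_not_mem this]
      simp [hqp]

/-- A partition with all parts `≥ 2` and product of parts `ν` achieves the minimum possible
sum of parts (namely `Σ α_i p_i` over the prime factorization of `ν`) if and only if it is
of the shape `⟨2^{α₁-2β} 4^{β} p₂^{α₂} p₃^{α₃} ⋯⟩` for some `β` with `0 ≤ 2β ≤ α₁`,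
where `α₁` is the exponent of `2` in `ν`. -/
theorem min_size_partition_classification (ν : ℕ) (hν : 1 ≤ ν) (M : Multiset ℕ)
    (hM : ∀ a ∈ M, 2 ≤ a) (hprod : M.prod = ν) :
    M.sum = (ν.factorization.sum fun p a => a * p) ↔
      ∃ β : ℕ, 2 * β ≤ ν.factorization 2 ∧
        M = Multiset.replicate (ν.factorization 2 - 2 * β) 2 +
            Multiset.replicate β 4 +
            ((ν.primeFactorsList.filter (fun p => p ≠ 2) : List ℕ) : Multiset ℕ) := by
  have hM0 : ∀ a ∈ M, a ≠ 0 := fun a ha => by have := hM a ha; omega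
  have hfprod : (M.map fS).sum = fS ν := by rw [← fS_prod M hM0, hprod]
  constructor
  · intro hsum
    have hle : ∀ a ∈ M, fS a ≤ a := fun a ha => (fS_key a (hM a ha)).1
    rw [show (ν.factorization.sum fun p a => a * p) = fS ν from rfl] at hsum
    have heq : ∀ a ∈ M, fS a = a := by
      apply sum_map_eq_of M fS hle
      rw [hfprod, hsum]
    have hp4 : ∀ a ∈ M, a.Prime ∨ a = 4 := fun a ha =>
      (fS_key a (hM a ha)).2.1 (heq a ha)
    have hα2 : ν.factorization 2 = M.count 2 + 2 * M.count 4 := by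
      rw [← hprod, fact_count M hM0 2, map_fact2 M hp4]
    have hαq : ∀ q, q.Prime → q ≠ 2 → ν.factorization q = M.count q := fun q hqp hq2 => by
      rw [← hprod, fact_count M hM0 q, map_factq M hp4 q hqp hq2]
    refine ⟨M.count 4, by omega, ?_⟩
    ext q
    rw [Multiset.count_add, Multiset.count_add, Multiset.count_replicate,
      Multiset.count_replicate, count_L]
    by_cases hq2 : q = 2
    · subst hq2
      simp only [if_pos rfl]
      norm_num
      omega
    · by_cases hq4 : q = 4
      · subst hq4
        have : ¬ (4 : ℕ).Prime := by norm_num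
        simp [this]
      · by_cases hqp : q.Prime
        · rw [hαq q hqp hq2] at *
          simp [hq2, hq4, Ne.symm hq2, Ne.symm hq4, hqp, hαq q hqp hq2]
        · have hnm : q ∉ M := fun hmem => by
            rcases hp4 q hmem with h | h
            · exact hqp h
            · exact hq4 h
          rw [Multiset.count_eq_zero_of_notMem hnm]
          simp [hq2, hq4, Ne.symm hq2, Ne.symm hq4, hqp]
  · rintro ⟨β, hβ, hMeq⟩
    have hp4 : ∀ a ∈ M, a.Prime ∨ a = 4 := by
      intro a ha
      rw [hMeq] at ha
      simp only [Multiset.mem_add] at ha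
      rcases ha with (ha | ha) | ha
      · left; rw [Multiset.eq_of_mem_replicate ha]; exact Nat.prime_two
      · right; exact Multiset.eq_of_mem_replicate ha
      · left
        rw [Multiset.mem_coe] at ha
        exact Nat.prime_of_mem_primeFactorsList (List.mem_of_mem_filter ha)
    have : M.map fS = M.map id := by
      apply Multiset.map_congr rfl
      intro a ha
      rcases hp4 a ha with h | h
      · exact fS_prime h
      · rw [h]; exact fS_four
    rw [show (ν.factorization.sum fun p a => a * p) = fS ν from rfl, ← hfprod, this,
      Multiset.map_id]
end
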